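/- arXiv:2204.14128 — 5 statements merged into one kernel-verified Lean document; each statement's English description precedes it below -/
import Mathlib

section
/- Let Ω⊂ℝ^n and let φ∈Φ_c(Ω) satisfy (VA1) with modulus of continuity ω. Then there exists L>0 such that for every ball B=B_r⊂Ω and every measurable f with ϱ_φ(Lf)≤1, one has φ⁻_B( (1/(1+ω(r))) ⨍_B |f| dx ) ≤ ⨍_B φ(x,|f(x)|) dx + ω(r), where ⨍_B denotes the integral average over B. -/
open MeasureTheory Filter Set
open scoped ENNReal

noncomputable section

/-- A partition of the interval `[a, b]` into finitely many nondegenerate closed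
subintervals with pairwise disjoint interiors, encoded by its endpoints
`a = x 0 < x 1 < ⋯ < x n = b`. -/
structure IntervalPartition (a b : ℝ) where
  n : ℕ
  npos : 0 < n
  x : ℕ → ℝ
  left : x 0 = a
  right : x n = b
  strict : ∀ i < n, x i < x (i + 1)

/-- The mesh `|(I_k)|` of a partition: the maximal length of its subintervals. -/
def IntervalPartition.mesh {a b : ℝ} (P : IntervalPartition a b) : ℝ :=
  (Finset.range P.n).sup' (Finset.nonempty_range_iff.mpr P.npos.ne')
    fun k => P.x (k + 1) - P.x k

/-- `φ⁺_A(t) = sup_{x ∈ A} φ(x, t)`. -/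
def phiSup {α : Type*} (φ : α → ℝ → ℝ≥0∞) (A : Set α) (t : ℝ) : ℝ≥0∞ :=
  ⨆ x ∈ A, φ x t

/-- `φ⁻_A(t) = inf_{x ∈ A} φ(x, t)`. -/
def phiInf {α : Type*} (φ : α → ℝ → ℝ≥0∞) (A : Set α) (t : ℝ) : ℝ≥0∞ :=
  ⨅ x ∈ A, φ x t

/-- `Σ_k φ⁺_{I_k}(|Δ_k f| / |I_k|) · |I_k|` associated to a partition of `[a,b]`. -/
def vSum (φ : ℝ → ℝ → ℝ≥0∞) {a b : ℝ} (f : ℝ → ℝ) (P : IntervalPartition a b) : ℝ≥0∞ :=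
  ∑ k ∈ Finset.range P.n,
    phiSup φ (Icc (P.x k) (P.x (k + 1)))
        (|f (P.x (k + 1)) - f (P.x k)| / (P.x (k + 1) - P.x k)) *
      ENNReal.ofReal (P.x (k + 1) - P.x k)

/-- The same sum with `φ⁻` in place of `φ⁺`. -/
def vSumInf (φ : ℝ → ℝ → ℝ≥0∞) {a b : ℝ} (f : ℝ → ℝ) (P : IntervalPartition a b) : ℝ≥0∞ :=
  ∑ k ∈ Finset.range P.n,
    phiInf φ (Icc (P.x k) (P.x (k + 1)))
        (|f (P.x (k + 1)) - f (P.x k)| / (P.x (k + 1) - P.x k)) *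
      ENNReal.ofReal (P.x (k + 1) - P.x k)

/-- The Riesz φ-variation `V^φ_I(f)`: supremum over all partitions. -/
def rieszVar (φ : ℝ → ℝ → ℝ≥0∞) (a b : ℝ) (f : ℝ → ℝ) : ℝ≥0∞ :=
  ⨆ P : IntervalPartition a b, vSum φ f P

/-- The upper Riesz φ-variation `V̄^φ_I(f) = limsup_{|(I_k)|→0} Σ φ⁺_{I_k}(|Δ_k f|/|I_k|)|I_k|`. -/
def rieszVarUpper (φ : ℝ → ℝ → ℝ≥0∞) (a b : ℝ) (f : ℝ → ℝ) : ℝ≥0∞ :=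
  ⨅ (δ : ℝ) (_ : 0 < δ), ⨆ (P : IntervalPartition a b) (_ : P.mesh < δ), vSum φ f P

/-- The lower Riesz φ-variation `V̲^φ_I(f) = limsup_{|(I_k)|→0} Σ φ⁻_{I_k}(|Δ_k f|/|I_k|)|I_k|`. -/
def rieszVarLower (φ : ℝ → ℝ → ℝ≥0∞) (a b : ℝ) (f : ℝ → ℝ) : ℝ≥0∞ :=
  ⨅ (δ : ℝ) (_ : 0 < δ), ⨆ (P : IntervalPartition a b) (_ : P.mesh < δ), vSumInf φ f P

/-- Riesz φ-variation for `φ` independent of `x`. -/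
def vSumC (φ : ℝ → ℝ≥0∞) {a b : ℝ} (f : ℝ → ℝ) (P : IntervalPartition a b) : ℝ≥0∞ :=
  ∑ k ∈ Finset.range P.n,
    φ (|f (P.x (k + 1)) - f (P.x k)| / (P.x (k + 1) - P.x k)) *
      ENNReal.ofReal (P.x (k + 1) - P.x k)

def rieszVarC (φ : ℝ → ℝ≥0∞) (a b : ℝ) (f : ℝ → ℝ) : ℝ≥0∞ :=
  ⨆ P : IntervalPartition a b, vSumC φ f P

def rieszVarUpperC (φ : ℝ → ℝ≥0∞) (a b : ℝ) (f : ℝ → ℝ) : ℝ≥0∞ :=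
  ⨅ (δ : ℝ) (_ : 0 < δ), ⨆ (P : IntervalPartition a b) (_ : P.mesh < δ), vSumC φ f P

/-- A weak Φ-function on `I` (`φ ∈ Φ_w(I)`). -/
structure IsPhiW {α : Type*} [MeasurableSpace α] (φ : α → ℝ → ℝ≥0∞) (I : Set α) : Prop where
  meas : ∀ f : α → ℝ, Measurable f → Measurable fun x => φ x |f x|
  mono : ∀ x ∈ I, MonotoneOn (φ x) (Ici 0)
  map_zero : ∀ x ∈ I, φ x 0 = 0
  tendsto_zero : ∀ x ∈ I, Tendsto (φ x) (nhdsWithin 0 (Ioi 0)) (nhds 0)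
  tendsto_top : ∀ x ∈ I, Tendsto (φ x) atTop (nhds ⊤)
  aInc1 : ∃ L : ℝ, 1 ≤ L ∧ ∀ x ∈ I, ∀ s t : ℝ, 0 < s → s ≤ t →
    φ x s / ENNReal.ofReal s ≤ ENNReal.ofReal L * (φ x t / ENNReal.ofReal t)

/-- A convex Φ-function on `I` (`φ ∈ Φ_c(I)`): weak, convex and left-continuous in `t`. -/
structure IsPhiCx {α : Type*} [MeasurableSpace α] (φ : α → ℝ → ℝ≥0∞) (I : Set α) : Prop where
  toIsPhiW : IsPhiW φ I
  convex : ∀ x ∈ I, ∀ s t θ : ℝ, 0 ≤ s → 0 ≤ t → 0 ≤ θ → θ ≤ 1 →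
    φ x (θ * s + (1 - θ) * t) ≤ ENNReal.ofReal θ * φ x s + ENNReal.ofReal (1 - θ) * φ x t
  leftCont : ∀ x ∈ I, ∀ t : ℝ, 0 < t → Tendsto (φ x) (nhdsWithin t (Iio t)) (nhds (φ x t))

/-- An `x`-independent convex Φ-function (`φ ∈ Φ_c`). -/
structure IsPhiC (φ : ℝ → ℝ≥0∞) : Prop where
  mono : MonotoneOn φ (Ici 0)
  map_zero : φ 0 = 0
  tendsto_zero : Tendsto φ (nhdsWithin 0 (Ioi 0)) (nhds 0)
  tendsto_top : Tendsto φ atTop (nhds ⊤)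
  convex : ∀ s t θ : ℝ, 0 ≤ s → 0 ≤ t → 0 ≤ θ → θ ≤ 1 →
    φ (θ * s + (1 - θ) * t) ≤ ENNReal.ofReal θ * φ s + ENNReal.ofReal (1 - θ) * φ t
  leftCont : ∀ t : ℝ, 0 < t → Tendsto φ (nhdsWithin t (Iio t)) (nhds (φ t))

/-- `(aInc)_1` with a given constant `L`. -/
def AInc1Const (φ : ℝ → ℝ → ℝ≥0∞) (I : Set ℝ) (L : ℝ) : Prop :=
  1 ≤ L ∧ ∀ x ∈ I, ∀ s t : ℝ, 0 < s → s ≤ t →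
    φ x s / ENNReal.ofReal s ≤ ENNReal.ofReal L * (φ x t / ENNReal.ofReal t)

/-- `(aInc)_p`: `t ↦ φ(x,t)/t^p` is almost increasing, uniformly in `x ∈ I`. -/
def AIncP (φ : ℝ → ℝ → ℝ≥0∞) (I : Set ℝ) (p : ℝ) : Prop :=
  ∃ Lp : ℝ, 1 ≤ Lp ∧ ∀ x ∈ I, ∀ s t : ℝ, 0 < s → s ≤ t →
    φ x s / ENNReal.ofReal (s ^ p) ≤ ENNReal.ofReal Lp * (φ x t / ENNReal.ofReal (t ^ p))

/-- `(aDec)_q`: `t ↦ φ(x,t)/t^q` is almost decreasing, uniformly in `x ∈ I`. -/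
def ADecQ (φ : ℝ → ℝ → ℝ≥0∞) (I : Set ℝ) (q : ℝ) : Prop :=
  ∃ Lq : ℝ, 1 ≤ Lq ∧ ∀ x ∈ I, ∀ s t : ℝ, 0 < s → s ≤ t →
    φ x t / ENNReal.ofReal (t ^ q) ≤ ENNReal.ofReal Lq * (φ x s / ENNReal.ofReal (s ^ q))

/-- `(A0)`. -/
def A0 (φ : ℝ → ℝ → ℝ≥0∞) (I : Set ℝ) : Prop :=
  ∃ β : ℝ, 0 < β ∧ β ≤ 1 ∧ ∀ x ∈ I, φ x β ≤ 1 ∧ 1 ≤ φ x (1 / β)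

/-- `(A1)`; in dimension one a ball of radius `r` has measure `2r`. -/
def A1 (φ : ℝ → ℝ → ℝ≥0∞) (I : Set ℝ) : Prop :=
  ∀ K : ℝ, 0 < K → ∃ β : ℝ, 0 < β ∧ β ≤ 1 ∧
    ∀ z r : ℝ, 0 < r → ∀ x ∈ Metric.ball z r ∩ I, ∀ y ∈ Metric.ball z r ∩ I,
      ∀ t : ℝ, 0 ≤ t → φ y t ≤ ENNReal.ofReal (K / (2 * r)) →
        φ x (β * t) ≤ φ y t + 1

/-- A modulus of continuity: nonnegative with `ω(r) → 0` as `r → 0⁺`. -/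
def IsModulus (ω : ℝ → ℝ) : Prop :=
  (∀ r, 0 ≤ ω r) ∧ Tendsto ω (nhdsWithin 0 (Ioi 0)) (nhds 0)

/-- `(VA1)`; in dimension one a ball of radius `r` has measure `2r`. -/
def VA1 (φ : ℝ → ℝ → ℝ≥0∞) (I : Set ℝ) : Prop :=
  ∀ K : ℝ, 0 < K → ∃ ω : ℝ → ℝ, IsModulus ω ∧
    ∀ z r : ℝ, 0 < r → ∀ x ∈ Metric.ball z r ∩ I, ∀ y ∈ Metric.ball z r ∩ I,
      ∀ t : ℝ, 0 ≤ t → φ y t ≤ ENNReal.ofReal (K / (2 * r)) →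
        φ x (t / (1 + ω r)) ≤ φ y t + ENNReal.ofReal (ω r)

/-- `φ'_∞(x) = lim_{t→∞} φ(x,t)/t`, realized as a supremum since the ratio is nondecreasing
for convex `φ` with `φ(x,0) = 0`. -/
def phiInfty {α : Type*} (φ : α → ℝ → ℝ≥0∞) (x : α) : ℝ≥0∞ :=
  ⨆ (t : ℝ) (_ : 0 < t), φ x t / ENNReal.ofReal t

/-- Membership in `RBV^φ([a,b])`: `V^φ(λ f) → 0` as `λ → 0⁺`. -/
def MemRBV (φ : ℝ → ℝ → ℝ≥0∞) (a b : ℝ) (f : ℝ → ℝ) : Prop :=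
  Tendsto (fun lam : ℝ => rieszVar φ a b fun x => lam * f x) (nhdsWithin 0 (Ioi 0)) (nhds 0)

/-- The Luxemburg quasi-seminorm `‖f‖_{RBV^φ([a,b])}`. -/
def rbvNorm (φ : ℝ → ℝ → ℝ≥0∞) (a b : ℝ) (f : ℝ → ℝ) : ℝ :=
  sInf {lam : ℝ | 0 < lam ∧ rieszVar φ a b (fun x => f x / lam) ≤ 1}

/-- The Luxemburg quasi-seminorm associated to the upper Riesz variation. -/
def rbvNormUpper (φ : ℝ → ℝ → ℝ≥0∞) (a b : ℝ) (f : ℝ → ℝ) : ℝ :=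
  sInf {lam : ℝ | 0 < lam ∧ rieszVarUpper φ a b (fun x => f x / lam) ≤ 1}

/-- Membership in the generalized Orlicz space `L^φ([a,b])`. -/
def MemLphi (φ : ℝ → ℝ → ℝ≥0∞) (a b : ℝ) (g : ℝ → ℝ) : Prop :=
  Measurable g ∧
    Tendsto (fun lam : ℝ => ∫⁻ x in Icc a b, φ x (lam * |g x|))
      (nhdsWithin 0 (Ioi 0)) (nhds 0)

/-- The Luxemburg quasi-norm on `L^φ([a,b])`. -/
def lphiNorm (φ : ℝ → ℝ → ℝ≥0∞) (a b : ℝ) (g : ℝ → ℝ) : ℝ :=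
  sInf {lam : ℝ | 0 < lam ∧ (∫⁻ x in Icc a b, φ x (|g x| / lam)) ≤ 1}

/-- Absolute continuity of `f` on `[a, b]`. -/
def AbsContOn (f : ℝ → ℝ) (a b : ℝ) : Prop :=
  ∀ ε : ℝ, 0 < ε → ∃ δ : ℝ, 0 < δ ∧ ∀ (m : ℕ) (s t : ℕ → ℝ),
    (∀ i < m, a ≤ s i ∧ s i ≤ t i ∧ t i ≤ b) →
    (∀ i j, i < j → j < m → t i ≤ s j ∨ t j ≤ s i) →
    (∑ i ∈ Finset.range m, (t i - s i)) < δ →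
    (∑ i ∈ Finset.range m, |f (t i) - f (s i)|) < ε

/-- Left-continuity of `f` at every point of `(a, b]`. -/
def LeftContOn (f : ℝ → ℝ) (a b : ℝ) : Prop :=
  ∀ x ∈ Ioc a b, Tendsto f (nhdsWithin x (Iio x)) (nhds (f x))

/-- `μ` is the distributional derivative measure of the left-continuous function `f` of
bounded variation on `[a,b]`: `f(x) = f(a) + Df([a, x))`. -/
def IsDerivMeasure (f : ℝ → ℝ) (a b : ℝ) (μ : SignedMeasure ℝ) : Prop :=
  ∀ x ∈ Icc a b, f x = f a + μ (Ico a x)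

end
set_option maxHeartbeats 1000000 in
/-- **Jensen's inequality with constant close to 1** (Theorem 2.7).  If `φ ∈ Φ_c(Ω)`
satisfies (VA1) with modulus of continuity `ω`, then there is `L > 0` such that for every
ball `B = B_r(z) ⊆ Ω` and every measurable `f` with `ϱ_φ(L f) ≤ 1`,
`φ⁻_B((1/(1+ω r)) ⨍_B |f|) ≤ ⨍_B φ(x,|f|) dx + ω r`. -/
theorem jensen_inequality_va1 (n : ℕ) (Ω : Set (EuclideanSpace ℝ (Fin n)))
    (φ : EuclideanSpace ℝ (Fin n) → ℝ → ℝ≥0∞) (hφ : IsPhiCx φ Ω)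
    (ω : ℝ → ℝ) (hω : IsModulus ω)
    (hva1 : ∀ (z : EuclideanSpace ℝ (Fin n)) (r : ℝ), 0 < r → Metric.ball z r ⊆ Ω →
      ∀ x ∈ Metric.ball z r, ∀ y ∈ Metric.ball z r, ∀ t : ℝ, 0 ≤ t →
        φ y t ≤ 1 / volume (Metric.ball z r) →
        φ x (t / (1 + ω r)) ≤ φ y t + ENNReal.ofReal (ω r)) :
    ∃ L : ℝ, 0 < L ∧
      ∀ (z : EuclideanSpace ℝ (Fin n)) (r : ℝ), 0 < r → Metric.ball z r ⊆ Ω →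
        ∀ f : EuclideanSpace ℝ (Fin n) → ℝ, Measurable f →
          (∫⁻ x in Ω, φ x (L * |f x|)) ≤ 1 →
          phiInf φ (Metric.ball z r)
              ((1 / (1 + ω r)) * ⨍ x in Metric.ball z r, |f x|)
            ≤ (∫⁻ x in Metric.ball z r, φ x |f x|) / volume (Metric.ball z r)
              + ENNReal.ofReal (ω r) := by
  classical
  refine ⟨2, by norm_num, ?_⟩
  intro z r hr hΩ f hf hmod
  obtain ⟨x₀, hx₀⟩ : (Metric.ball z r).Nonempty := Metric.nonempty_ball.mpr hr
  have hμ0 : volume (Metric.ball z r) ≠ 0 := (Metric.measure_ball_pos volume z hr).ne'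
  have hμt : volume (Metric.ball z r) ≠ ⊤ := measure_ball_lt_top.ne
  have hω0 : 0 ≤ ω r := hω.1 r
  have h1ω : (0:ℝ) < 1 + ω r := by linarith
  have hzero : ∀ x ∈ Metric.ball z r, φ x 0 = 0 := fun x hx => hφ.toIsPhiW.map_zero x (hΩ hx)
  have hInfle : ∀ (t : ℝ), ∀ y ∈ Metric.ball z r, phiInf φ (Metric.ball z r) t ≤ φ y t := by
    intro t y hy
    exact biInf_le (fun x => φ x t) hy
  have htriv : phiInf φ (Metric.ball z r) 0 = 0 := by
    refine le_antisymm ?_ (zero_le)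
    exact le_trans (hInfle 0 x₀ hx₀) (le_of_eq (hzero x₀ hx₀))
  have e0 : ∀ x : ℝ, ENNReal.ofReal x = ENNReal.ofReal (max x 0) := by
    intro x; rcases le_total x 0 with h | h
    · rw [ENNReal.ofReal_of_nonpos h, max_eq_right h, ENNReal.ofReal_zero]
    · rw [max_eq_left h]
  by_cases hint : IntegrableOn (fun y => |f y|) (Metric.ball z r) volume
  swap
  · have havg : (⨍ x in Metric.ball z r, |f x|) = 0 := by
      rw [setAverage_eq, integral_undef hint, smul_zero]
    rw [havg, mul_zero, htriv]
    exact zero_le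
  have hconstInt : ∀ cc : ℝ, IntegrableOn (fun _ : EuclideanSpace ℝ (Fin n) => cc)
      (Metric.ball z r) volume :=
    fun cc => integrableOn_const measure_ball_lt_top.ne
  set tb := ⨍ x in Metric.ball z r, |f x| with htb
  have hκpos : 0 < (volume (Metric.ball z r)).toReal := ENNReal.toReal_pos hμ0 hμt
  have hIntf : ∫ x in Metric.ball z r, |f x| = (volume (Metric.ball z r)).toReal * tb := by
    rw [htb, setAverage_eq, smul_eq_mul, measureReal_def]
    field_simp
  have htb0 : 0 ≤ tb := by
    have h1 : 0 ≤ ∫ x in Metric.ball z r, |f x| := integral_nonneg fun x => abs_nonneg _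
    nlinarith [hIntf]
  rcases eq_or_lt_of_le htb0 with h0 | htbpos
  · rw [← h0, mul_zero, htriv]; exact zero_le
  set s := (1 / (1 + ω r)) * tb with hs
  have hs' : s = tb / (1 + ω r) := by rw [hs]; ring
  have hspos : 0 < s := by rw [hs']; positivity
  have hstb : s ≤ tb := by rw [hs']; exact div_le_self htb0 (by linarith)
  set m' := phiInf φ (Metric.ball z r) s with hm'
  set ϖ := ENNReal.ofReal (ω r) with hϖ
  have hϖt : ϖ ≠ ⊤ := ENNReal.ofReal_ne_top
  set M := m' - ϖ with hM
  have hred : m' ≤ M + ϖ := le_tsub_add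
  suffices hMR : M ≤ (∫⁻ x in Metric.ball z r, φ x |f x|) / volume (Metric.ball z r) by
    exact le_trans hred (add_le_add_left hMR ϖ)
  by_cases hM0 : M = 0
  · rw [hM0]; exact zero_le
  have hϖltm : ϖ < m' := by
    have h1 : 0 < M := pos_iff_ne_zero.mpr hM0
    rw [hM, tsub_pos_iff_lt] at h1
    exact h1
  -- ratio bound from convexity
  have hratio : ∀ y ∈ Metric.ball z r, ∀ τ : ℝ, s ≤ τ →
      m' * ENNReal.ofReal (τ / s) ≤ φ y τ := by
    intro y hy τ hτ
    have hτpos : 0 < τ := lt_of_lt_of_le hspos hτ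
    have hθ1 : s / τ ≤ 1 := by rw [div_le_one hτpos]; exact hτ
    have hconv := hφ.convex y (hΩ hy) τ 0 (s / τ) hτpos.le le_rfl (by positivity) hθ1
    have harg : s / τ * τ + (1 - s / τ) * 0 = s := by field_simp; ring
    rw [harg, hzero y hy, mul_zero, add_zero] at hconv
    have h1 : m' ≤ ENNReal.ofReal (s / τ) * φ y τ := le_trans (hInfle s y hy) hconv
    calc m' * ENNReal.ofReal (τ / s)
        ≤ ENNReal.ofReal (s / τ) * φ y τ * ENNReal.ofReal (τ / s) := mul_le_mul_left h1 _
      _ = ENNReal.ofReal (s / τ) * ENNReal.ofReal (τ / s) * φ y τ := by ring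
      _ = ENNReal.ofReal (s / τ * (τ / s)) * φ y τ := by
          rw [ENNReal.ofReal_mul (by positivity)]
      _ = φ y τ := by
          rw [show s / τ * (τ / s) = 1 by field_simp, ENNReal.ofReal_one, one_mul]
  -- the modular bound gives m' ≤ 1/|B|
  have hm'c : m' ≤ 1 / volume (Metric.ball z r) := by
    have hptw : ∀ y ∈ Metric.ball z r,
        m' * ENNReal.ofReal ((2 * |f y| - s) / s) ≤ φ y (2 * |f y|) := by
      intro y hy
      by_cases hcase : s ≤ 2 * |f y|
      · refine le_trans ?_ (hratio y hy (2 * |f y|) hcase)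
        refine mul_le_mul_right (ENNReal.ofReal_le_ofReal ?_) m'
        exact (div_le_div_iff_of_pos_right hspos).mpr (by linarith)
      · have hle : (2 * |f y| - s) / s ≤ 0 :=
          div_nonpos_of_nonpos_of_nonneg (by linarith) hspos.le
        rw [ENNReal.ofReal_eq_zero.mpr hle, mul_zero]
        exact zero_le
    have hint2 : IntegrableOn (fun y => (2 * |f y| - s) / s) (Metric.ball z r) volume :=
      ((hint.const_mul 2).sub (hconstInt s)).div_const s
    have hmax2 : IntegrableOn (fun y => max ((2 * |f y| - s) / s) 0) (Metric.ball z r) volume :=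
      hint2.pos_part
    have hlow : ENNReal.ofReal ((volume (Metric.ball z r)).toReal)
        ≤ ∫⁻ y in Metric.ball z r, ENNReal.ofReal ((2 * |f y| - s) / s) := by
      have e1 : ∫⁻ y in Metric.ball z r, ENNReal.ofReal ((2 * |f y| - s) / s)
          = ENNReal.ofReal (∫ y in Metric.ball z r, max ((2 * |f y| - s) / s) 0) := by
        rw [ofReal_integral_eq_lintegral_ofReal hmax2 (ae_of_all _ fun y => le_max_right _ _)]
        exact lintegral_congr fun y => e0 _
      rw [e1]
      apply ENNReal.ofReal_le_ofReal
      have e2 : ∫ y in Metric.ball z r, (2 * |f y| - s) / s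
          ≤ ∫ y in Metric.ball z r, max ((2 * |f y| - s) / s) 0 :=
        integral_mono_ae hint2 hmax2 (ae_of_all _ fun y => le_max_left _ _)
      have e3 : ∫ y in Metric.ball z r, (2 * |f y| - s) / s
          = ((volume (Metric.ball z r)).toReal * (2 * tb - s)) / s := by
        rw [integral_div, integral_sub (hint.const_mul 2) (hconstInt s),
          integral_const_mul, hIntf, setIntegral_const, smul_eq_mul, measureReal_def]
        ring
      rw [e3] at e2
      have e4 : (volume (Metric.ball z r)).toReal
          ≤ ((volume (Metric.ball z r)).toReal * (2 * tb - s)) / s := by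
        rw [le_div_iff₀ hspos]
        nlinarith [hstb, hκpos]
      linarith
    have hmeasφ2 : Measurable fun y => φ y (2 * |f y|) := by
      have := hφ.toIsPhiW.meas (fun y => 2 * f y) (hf.const_mul 2)
      simpa only [abs_mul, abs_two] using this
    have hup : ∫⁻ y in Metric.ball z r, m' * ENNReal.ofReal ((2 * |f y| - s) / s) ≤ 1 := by
      refine le_trans (setLIntegral_mono hmeasφ2 hptw) (le_trans (lintegral_mono_set hΩ) hmod)
    rw [lintegral_const_mul m' (f := fun y => ENNReal.ofReal ((2 * |f y| - s) / s))
      ((((hf.abs.const_mul 2).sub measurable_const).div_const s).ennreal_ofReal)] at hup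
    have hchain : m' * ENNReal.ofReal ((volume (Metric.ball z r)).toReal) ≤ 1 :=
      le_trans (mul_le_mul_right hlow m') hup
    rw [ENNReal.ofReal_toReal hμt] at hchain
    exact (ENNReal.le_div_iff_mul_le (Or.inl hμ0) (Or.inl hμt)).mpr hchain
  have hctop : (1:ℝ≥0∞) / volume (Metric.ball z r) ≠ ⊤ := by
    simp [ENNReal.div_eq_top, hμ0]
  have hm't : m' ≠ ⊤ := ne_top_of_le_ne_top hctop hm'c
  have hMm' : M ≤ m' := by rw [hM]; exact tsub_le_self
  have hMt : M ≠ ⊤ := ne_top_of_le_ne_top hm't hMm'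
  have hMc : M ≤ 1 / volume (Metric.ball z r) := le_trans hMm' hm'c
  -- F4 : VA1 transfer through the infimum
  have F4 : ∀ u : ℝ, 0 ≤ u →
      phiInf φ (Metric.ball z r) u < 1 / volume (Metric.ball z r) →
      ∀ y ∈ Metric.ball z r,
        φ y (u / (1 + ω r)) ≤ phiInf φ (Metric.ball z r) u + ϖ := by
    intro u hu hlt y hy
    apply ENNReal.le_of_forall_pos_le_add
    intro ε hε _
    have hput : phiInf φ (Metric.ball z r) u ≠ ⊤ := ne_top_of_lt hlt
    have hwit : phiInf φ (Metric.ball z r) u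
        < min (phiInf φ (Metric.ball z r) u + ε) (1 / volume (Metric.ball z r)) := by
      refine lt_min ?_ hlt
      exact ENNReal.lt_add_right hput (by exact_mod_cast hε.ne')
    have hwit' : (⨅ x ∈ Metric.ball z r, φ x u)
        < min (phiInf φ (Metric.ball z r) u + ε) (1 / volume (Metric.ball z r)) := hwit
    obtain ⟨w, hw⟩ := iInf_lt_iff.mp hwit'
    obtain ⟨hwB, hwlt⟩ := iInf_lt_iff.mp hw
    have hthr : φ w u ≤ 1 / volume (Metric.ball z r) :=
      (lt_of_lt_of_le hwlt (min_le_right _ _)).le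
    have hva := hva1 z r hr hΩ y hy w hwB u hu hthr
    calc φ y (u / (1 + ω r)) ≤ φ w u + ϖ := hva
      _ ≤ min (phiInf φ (Metric.ball z r) u + ε) (1 / volume (Metric.ball z r)) + ϖ :=
          add_le_add_left hwlt.le _
      _ ≤ phiInf φ (Metric.ball z r) u + ε + ϖ := add_le_add_left (min_le_left _ _) _
      _ = phiInf φ (Metric.ball z r) u + ϖ + ε := by ring
  -- admissible levels
  have hden : ∀ u : ℝ, u < tb → 0 < s - u / (1 + ω r) := by
    intro u hu
    have h2 : u / (1 + ω r) < tb / (1 + ω r) := (div_lt_div_iff_of_pos_right h1ω).mpr hu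
    rw [hs']; linarith
  haveI hAdmNe : Nonempty {u : ℝ // 0 ≤ u ∧ u < tb ∧
      phiInf φ (Metric.ball z r) u < 1 / volume (Metric.ball z r)} := by
    refine ⟨⟨0, le_rfl, htbpos, ?_⟩⟩
    rw [htriv]
    exact ENNReal.div_pos one_ne_zero hμt
  set σf : {u : ℝ // 0 ≤ u ∧ u < tb ∧
      phiInf φ (Metric.ball z r) u < 1 / volume (Metric.ball z r)} → ℝ≥0∞ :=
    fun u => (M - phiInf φ (Metric.ball z r) u.1) /
      ENNReal.ofReal (s - u.1 / (1 + ω r)) with hσf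
  set σS := ⨆ u, σf u with hσS
  -- F5 : slope bound
  have F5 : ∀ u, ∀ y ∈ Metric.ball z r, ∀ τ : ℝ, s ≤ τ →
      m' + σf u * ENNReal.ofReal (τ - s) ≤ φ y τ := by
    intro u y hy τ hτ
    obtain ⟨hu0, hutb, hpuc⟩ := u.2
    rcases eq_or_lt_of_le hτ with rfl | hsτ
    · rw [sub_self, ENNReal.ofReal_zero, mul_zero, add_zero]
      exact hInfle s y hy
    by_cases htop : φ y τ = ⊤
    · rw [htop]; exact le_top
    have ha0 : 0 ≤ u.1 / (1 + ω r) := by positivity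
    have has : u.1 / (1 + ω r) < s := by have := hden u.1 hutb; linarith
    have hpa := F4 u.1 hu0 hpuc y hy
    have hput : phiInf φ (Metric.ball z r) u.1 ≠ ⊤ := ne_top_of_lt hpuc
    have hpaT : φ y (u.1 / (1 + ω r)) ≠ ⊤ :=
      ne_top_of_le_ne_top (ENNReal.add_ne_top.mpr ⟨hput, hϖt⟩) hpa
    by_cases hpM : M ≤ phiInf φ (Metric.ball z r) u.1
    · have hz : σf u = 0 := by
        rw [hσf]; simp [tsub_eq_zero_of_le hpM]
      rw [hz, zero_mul, add_zero]
      refine le_trans (hInfle s y hy) ?_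
      exact hφ.toIsPhiW.mono y (hΩ hy) (mem_Ici.mpr hspos.le)
        (mem_Ici.mpr (le_trans hspos.le hτ)) hτ
    push_neg at hpM
    have hτa : 0 < τ - u.1 / (1 + ω r) := by linarith
    have hsa : 0 < s - u.1 / (1 + ω r) := by linarith
    have hτs : 0 < τ - s := by linarith
    set θ := (τ - s) / (τ - u.1 / (1 + ω r)) with hθ
    have hθ0 : 0 ≤ θ := by positivity
    have hθ1 : θ ≤ 1 := by rw [hθ, div_le_one hτa]; linarith
    have hθe1 : θ * (τ - u.1 / (1 + ω r)) = τ - s := by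
      rw [hθ]; exact div_mul_cancel₀ _ hτa.ne'
    have hθe2 : (1 - θ) * (τ - u.1 / (1 + ω r)) = s - u.1 / (1 + ω r) := by
      linear_combination -hθe1
    have hconv := hφ.convex y (hΩ hy) (u.1 / (1 + ω r)) τ θ ha0 (by linarith) hθ0 hθ1
    have harg : θ * (u.1 / (1 + ω r)) + (1 - θ) * τ = s := by
      linear_combination -hθe1
    rw [harg] at hconv
    have hm1 : ENNReal.ofReal θ * φ y (u.1 / (1 + ω r)) ≠ ⊤ :=
      ENNReal.mul_ne_top ENNReal.ofReal_ne_top hpaT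
    have hm2 : ENNReal.ofReal (1 - θ) * φ y τ ≠ ⊤ :=
      ENNReal.mul_ne_top ENNReal.ofReal_ne_top htop
    have hφsT : φ y s ≠ ⊤ :=
      ne_top_of_le_ne_top (ENNReal.add_ne_top.mpr ⟨hm1, hm2⟩) hconv
    -- real versions
    have rS : (φ y s).toReal ≤ θ * (φ y (u.1 / (1 + ω r))).toReal + (1 - θ) * (φ y τ).toReal := by
      have h4 := ENNReal.toReal_mono (ENNReal.add_ne_top.mpr ⟨hm1, hm2⟩) hconv
      rwa [ENNReal.toReal_add hm1 hm2, ENNReal.toReal_mul, ENNReal.toReal_mul,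
        ENNReal.toReal_ofReal hθ0, ENNReal.toReal_ofReal (by linarith)] at h4
    have rmS : m'.toReal ≤ (φ y s).toReal := ENNReal.toReal_mono hφsT (hInfle s y hy)
    have rA : (φ y (u.1 / (1 + ω r))).toReal
        ≤ (phiInf φ (Metric.ball z r) u.1).toReal + ω r := by
      have h4 := ENNReal.toReal_mono (ENNReal.add_ne_top.mpr ⟨hput, hϖt⟩) hpa
      rwa [ENNReal.toReal_add hput hϖt, hϖ, ENNReal.toReal_ofReal hω0] at h4
    have rM : M.toReal = m'.toReal - ω r := by
      rw [hM, ENNReal.toReal_sub_of_le hϖltm.le hm't, hϖ, ENNReal.toReal_ofReal hω0]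
    have rpM : (phiInf φ (Metric.ball z r) u.1).toReal < M.toReal :=
      (ENNReal.toReal_lt_toReal hput hMt).mpr hpM
    have key : m'.toReal * (s - u.1 / (1 + ω r))
        + (M.toReal - (phiInf φ (Metric.ball z r) u.1).toReal) * (τ - s)
        ≤ (φ y τ).toReal * (s - u.1 / (1 + ω r)) := by
      have e1 : (φ y s).toReal * (τ - u.1 / (1 + ω r))
          ≤ (θ * (φ y (u.1 / (1 + ω r))).toReal + (1 - θ) * (φ y τ).toReal)
            * (τ - u.1 / (1 + ω r)) :=
        mul_le_mul_of_nonneg_right rS hτa.le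
      have e2 : (θ * (φ y (u.1 / (1 + ω r))).toReal + (1 - θ) * (φ y τ).toReal)
          * (τ - u.1 / (1 + ω r))
          = (φ y (u.1 / (1 + ω r))).toReal * (τ - s) + (φ y τ).toReal
            * (s - u.1 / (1 + ω r)) := by
        linear_combination (φ y (u.1 / (1 + ω r))).toReal * hθe1 + (φ y τ).toReal * hθe2
      have e3 : m'.toReal * (τ - u.1 / (1 + ω r)) ≤ (φ y s).toReal * (τ - u.1 / (1 + ω r)) :=
        mul_le_mul_of_nonneg_right rmS hτa.le
      have e4 : (φ y (u.1 / (1 + ω r))).toReal * (τ - s)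
          ≤ ((phiInf φ (Metric.ball z r) u.1).toReal + ω r) * (τ - s) :=
        mul_le_mul_of_nonneg_right rA hτs.le
      rw [e2] at e1
      rw [rM]
      linarith [e1, e3, e4]
    -- back to ℝ≥0∞
    have hnum : M - phiInf φ (Metric.ball z r) u.1 ≠ ⊤ := ne_top_of_le_ne_top hMt tsub_le_self
    have hden0 : ENNReal.ofReal (s - u.1 / (1 + ω r)) ≠ 0 := (ENNReal.ofReal_pos.mpr hsa).ne'
    have hσut : σf u ≠ ⊤ := by
      rw [hσf]
      exact (ENNReal.div_lt_top hnum hden0).ne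
    have hmulfin : σf u * ENNReal.ofReal (τ - s) ≠ ⊤ :=
      ENNReal.mul_ne_top hσut ENNReal.ofReal_ne_top
    have hLfin : m' + σf u * ENNReal.ofReal (τ - s) ≠ ⊤ :=
      ENNReal.add_ne_top.mpr ⟨hm't, hmulfin⟩
    rw [← ENNReal.toReal_le_toReal hLfin htop]
    have hσft : (σf u).toReal
        = (M.toReal - (phiInf φ (Metric.ball z r) u.1).toReal) / (s - u.1 / (1 + ω r)) := by
      rw [hσf]
      rw [ENNReal.toReal_div, ENNReal.toReal_ofReal hsa.le,
        ENNReal.toReal_sub_of_le hpM.le hMt]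
    rw [ENNReal.toReal_add hm't hmulfin, ENNReal.toReal_mul, hσft,
      ENNReal.toReal_ofReal hτs.le]
    have hfinal : (M.toReal - (phiInf φ (Metric.ball z r) u.1).toReal)
        / (s - u.1 / (1 + ω r)) * (τ - s) ≤ (φ y τ).toReal - m'.toReal := by
      rw [div_mul_eq_mul_div, div_le_iff₀ hsa]
      linarith [key]
    linarith
  -- master pointwise bound
  have master : ∀ y ∈ Metric.ball z r, ∀ τ : ℝ, 0 ≤ τ →
      M + σS * ENNReal.ofReal (τ - tb) ≤ φ y τ + σS * ENNReal.ofReal (tb - τ) := by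
    intro y hy τ hτ0
    by_cases hcase : tb ≤ τ
    · rw [show ENNReal.ofReal (tb - τ) = 0 from ENNReal.ofReal_eq_zero.mpr (by linarith),
        mul_zero, add_zero]
      rw [hσS, ENNReal.iSup_mul, ENNReal.add_iSup]
      refine iSup_le fun u => ?_
      refine le_trans ?_ (F5 u y hy τ (le_trans hstb hcase))
      exact add_le_add hMm'
        (mul_le_mul_right (ENNReal.ofReal_le_ofReal (by linarith)) _)
    · push_neg at hcase
      rw [show ENNReal.ofReal (τ - tb) = 0 from ENNReal.ofReal_eq_zero.mpr (by linarith),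
        mul_zero, add_zero]
      by_cases hpc : phiInf φ (Metric.ball z r) τ < 1 / volume (Metric.ball z r)
      · have hd0 : 0 < s - τ / (1 + ω r) := hden τ hcase
        have hkey : M - phiInf φ (Metric.ball z r) τ ≤ σS * ENNReal.ofReal (tb - τ) := by
          have h1 : σf ⟨τ, hτ0, hcase, hpc⟩ ≤ σS := by rw [hσS]; exact le_iSup σf _
          have h2 : M - phiInf φ (Metric.ball z r) τ
              = σf ⟨τ, hτ0, hcase, hpc⟩ * ENNReal.ofReal (s - τ / (1 + ω r)) := by
            rw [hσf]
            exact (ENNReal.div_mul_cancel ((ENNReal.ofReal_pos.mpr hd0).ne')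
              ENNReal.ofReal_ne_top).symm
          rw [h2]
          calc σf ⟨τ, hτ0, hcase, hpc⟩ * ENNReal.ofReal (s - τ / (1 + ω r))
              ≤ σS * ENNReal.ofReal (s - τ / (1 + ω r)) := mul_le_mul_left h1 _
            _ ≤ σS * ENNReal.ofReal (tb - τ) := by
                refine mul_le_mul_right (ENNReal.ofReal_le_ofReal ?_) _
                rw [hs', div_sub_div_same]
                exact div_le_self (by linarith) (by linarith)
        calc M ≤ phiInf φ (Metric.ball z r) τ + (M - phiInf φ (Metric.ball z r) τ) :=
              le_add_tsub
          _ ≤ φ y τ + σS * ENNReal.ofReal (tb - τ) := add_le_add (hInfle τ y hy) hkey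
      · push_neg at hpc
        calc M ≤ 1 / volume (Metric.ball z r) := hMc
          _ ≤ phiInf φ (Metric.ball z r) τ := hpc
          _ ≤ φ y τ := hInfle τ y hy
          _ ≤ φ y τ + σS * ENNReal.ofReal (tb - τ) := le_self_add
  -- split on σS = ⊤
  by_cases hσtop : σS = ⊤
  · have hblow : ∀ y ∈ Metric.ball z r, ∀ τ : ℝ, s < τ → φ y τ = ⊤ := by
      intro y hy τ hsτ
      have h1 : m' + σS * ENNReal.ofReal (τ - s) ≤ φ y τ := by
        rw [hσS, ENNReal.iSup_mul, ENNReal.add_iSup]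
        exact iSup_le fun u => F5 u y hy τ hsτ.le
      rw [hσtop, ENNReal.top_mul ((ENNReal.ofReal_pos.mpr (by linarith)).ne'),
        add_top] at h1
      exact top_le_iff.mp h1
    by_cases hA : (volume.restrict (Metric.ball z r))
        {y : EuclideanSpace ℝ (Fin n) | s < |f y|} = 0
    · have hae : ∀ᵐ y ∂(volume.restrict (Metric.ball z r)), |f y| ≤ s := by
        rw [ae_iff]
        simpa [not_le] using hA
      have htbles : tb ≤ s := by
        have h2 : ∫ y in Metric.ball z r, |f y| ≤ ∫ y in Metric.ball z r, s :=
          integral_mono_ae hint (hconstInt s) hae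
        rw [hIntf, setIntegral_const, smul_eq_mul] at h2
        exact le_of_mul_le_mul_left h2 hκpos
      have hseq : s = tb := le_antisymm hstb htbles
      have haetb : ∀ᵐ y ∂(volume.restrict (Metric.ball z r)), |f y| = tb := by
        have hnn : 0 ≤ᵐ[volume.restrict (Metric.ball z r)] fun y => tb - |f y| := by
          filter_upwards [hae] with y hy
          have h5 : |f y| ≤ tb := hseq ▸ hy
          simp only [Pi.zero_apply]
          linarith
        have hintsub : IntegrableOn (fun y => tb - |f y|) (Metric.ball z r) volume :=
          (hconstInt tb).sub hint
        have hz2 : ∫ y in Metric.ball z r, (tb - |f y|) = 0 := by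
          rw [integral_sub (hconstInt tb) hint, setIntegral_const, smul_eq_mul, hIntf, measureReal_def]
          ring
        have h3 := (integral_eq_zero_iff_of_nonneg_ae hnn hintsub).mp hz2
        filter_upwards [h3] with y hy
        have h4 : tb - |f y| = 0 := hy
        linarith
      have hfin : M * volume (Metric.ball z r) ≤ ∫⁻ x in Metric.ball z r, φ x |f x| := by
        have e1 : ∫⁻ x in Metric.ball z r, φ x |f x| = ∫⁻ x in Metric.ball z r, φ x tb :=
          lintegral_congr_ae (haetb.mono fun y hy => congrArg (φ y) hy)
        rw [e1]
        have e2 : ∀ x ∈ Metric.ball z r, M ≤ φ x tb := by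
          intro x hx
          calc M ≤ m' := hMm'
            _ ≤ φ x s := hInfle s x hx
            _ = φ x tb := by rw [hseq]
        have hmtb : Measurable fun x : EuclideanSpace ℝ (Fin n) => φ x tb := by
          have := hφ.toIsPhiW.meas (fun _ => tb) measurable_const
          simpa [abs_of_nonneg htb0] using this
        calc M * volume (Metric.ball z r)
            = ∫⁻ _ in Metric.ball z r, M ∂volume := (setLIntegral_const _ _).symm
          _ ≤ ∫⁻ x in Metric.ball z r, φ x tb := setLIntegral_mono hmtb e2
      exact (ENNReal.le_div_iff_mul_le (Or.inl hμ0) (Or.inl hμt)).mpr hfin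
    · have hSm : MeasurableSet {y : EuclideanSpace ℝ (Fin n) | s < |f y|} :=
        measurableSet_lt measurable_const hf.abs
      have htopint : ∫⁻ x in Metric.ball z r, φ x |f x| = ⊤ := by
        have hge : ∫⁻ x in Metric.ball z r,
            ({y : EuclideanSpace ℝ (Fin n) | s < |f y|}.indicator
              (fun _ => (⊤ : ℝ≥0∞)) x) ≤ ∫⁻ x in Metric.ball z r, φ x |f x| := by
          refine setLIntegral_mono (hφ.toIsPhiW.meas f hf) ?_
          intro x hx
          by_cases hmem : s < |f x|
          · rw [Set.indicator_of_mem (show x ∈ {y : EuclideanSpace ℝ (Fin n) | s < |f y|} from hmem),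
              hblow x hx _ hmem]
          · rw [Set.indicator_of_notMem
              (show x ∉ {y : EuclideanSpace ℝ (Fin n) | s < |f y|} from hmem)]
            exact zero_le
        rw [lintegral_indicator hSm, setLIntegral_const, ENNReal.top_mul hA] at hge
        exact top_le_iff.mp hge
      rw [htopint]
      have h5 : (⊤ : ℝ≥0∞) / volume (Metric.ball z r) = ⊤ := by
        simp [ENNReal.div_eq_top, hμt]
      rw [h5]
      exact le_top
  · -- σS finite : integrate the master bound
    have hσfin : σS ≠ ⊤ := hσtop
    have hImax1 : IntegrableOn (fun y => max (tb - |f y|) 0) (Metric.ball z r) volume :=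
      ((hconstInt tb).sub hint).pos_part
    have hImax2 : IntegrableOn (fun y => max (|f y| - tb) 0) (Metric.ball z r) volume :=
      (hint.sub (hconstInt tb)).pos_part
    have hDmeq : ∫⁻ y in Metric.ball z r, ENNReal.ofReal (tb - |f y|)
        = ENNReal.ofReal (∫ y in Metric.ball z r, max (tb - |f y|) 0) := by
      rw [ofReal_integral_eq_lintegral_ofReal hImax1 (ae_of_all _ fun y => le_max_right _ _)]
      exact lintegral_congr fun y => e0 _
    have hDpeq : ∫⁻ y in Metric.ball z r, ENNReal.ofReal (|f y| - tb)
        = ENNReal.ofReal (∫ y in Metric.ball z r, max (|f y| - tb) 0) := by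
      rw [ofReal_integral_eq_lintegral_ofReal hImax2 (ae_of_all _ fun y => le_max_right _ _)]
      exact lintegral_congr fun y => e0 _
    have hreal : ∫ y in Metric.ball z r, max (tb - |f y|) 0
        = ∫ y in Metric.ball z r, max (|f y| - tb) 0 := by
      have hz2 : ∫ y in Metric.ball z r, (max (tb - |f y|) 0 - max (|f y| - tb) 0) = 0 := by
        have hptg : ∀ y : EuclideanSpace ℝ (Fin n),
            max (tb - |f y|) 0 - max (|f y| - tb) 0 = tb - |f y| := by
          intro y; rcases le_total (|f y|) tb with h | h
          · rw [max_eq_left (by linarith), max_eq_right (by linarith)]; ring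
          · rw [max_eq_right (by linarith), max_eq_left (by linarith)]; ring
        simp_rw [hptg]
        rw [integral_sub (hconstInt tb) hint, setIntegral_const, smul_eq_mul, hIntf, measureReal_def]
        ring
      rw [integral_sub hImax1 hImax2] at hz2
      linarith
    have hDeq : ∫⁻ y in Metric.ball z r, ENNReal.ofReal (tb - |f y|)
        = ∫⁻ y in Metric.ball z r, ENNReal.ofReal (|f y| - tb) := by
      rw [hDmeq, hDpeq, hreal]
    have hDfin : ∫⁻ y in Metric.ball z r, ENNReal.ofReal (|f y| - tb) ≠ ⊤ := by
      rw [← hDeq, hDmeq]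
      exact ENNReal.ofReal_ne_top
    have hglob : M * volume (Metric.ball z r)
        + σS * ∫⁻ y in Metric.ball z r, ENNReal.ofReal (|f y| - tb)
        ≤ (∫⁻ x in Metric.ball z r, φ x |f x|)
          + σS * ∫⁻ y in Metric.ball z r, ENNReal.ofReal (tb - |f y|) := by
      have hL : ∫⁻ y in Metric.ball z r, (M + σS * ENNReal.ofReal (|f y| - tb))
          = M * volume (Metric.ball z r)
            + σS * ∫⁻ y in Metric.ball z r, ENNReal.ofReal (|f y| - tb) := by
        rw [lintegral_add_left measurable_const, setLIntegral_const,
          lintegral_const_mul σS (f := fun y => ENNReal.ofReal (|f y| - tb)) ((hf.abs.sub measurable_const).ennreal_ofReal)]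
      have hR : ∫⁻ y in Metric.ball z r, (φ y |f y| + σS * ENNReal.ofReal (tb - |f y|))
          = (∫⁻ x in Metric.ball z r, φ x |f x|)
            + σS * ∫⁻ y in Metric.ball z r, ENNReal.ofReal (tb - |f y|) := by
        rw [lintegral_add_left (hφ.toIsPhiW.meas f hf),
          lintegral_const_mul σS (f := fun y => ENNReal.ofReal (tb - |f y|)) ((measurable_const.sub hf.abs).ennreal_ofReal)]
      rw [← hL, ← hR]
      refine setLIntegral_mono ?_ ?_
      · exact (hφ.toIsPhiW.meas f hf).add
          (((measurable_const.sub hf.abs).ennreal_ofReal).const_mul σS)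
      · exact fun x hx => master x hx |f x| (abs_nonneg _)
    rw [hDeq] at hglob
    have hfin2 : σS * ∫⁻ y in Metric.ball z r, ENNReal.ofReal (|f y| - tb) ≠ ⊤ :=
      ENNReal.mul_ne_top hσfin hDfin
    have hcore : M * volume (Metric.ball z r) ≤ ∫⁻ x in Metric.ball z r, φ x |f x| :=
      (ENNReal.add_le_add_iff_right hfin2).mp hglob
    exact (ENNReal.le_div_iff_mul_le (Or.inl hμ0) (Or.inl hμt)).mpr hcore
end

section
/- Let I=[a,b]⊂ℝ be a closed nondegenerate interval. If φ∈Φ_w(I), then V^φ_I is a quasi-semimodular on the vector space of all functions f:I→ℝ (with quasi-convexity constant β=1/(2L), where L is the almost-increasing constant of φ). If moreover φ∈Φ_c(I), then V^φ_I is a semimodular (i.e. the quasi-convexity property holds with β=1, so V^φ_I is convex). -/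
open MeasureTheory Filter Set
open scoped ENNReal

section AuxLemmas

open MeasureTheory Filter Set
open scoped ENNReal

lemma IntervalPartition.x_le {a b : ℝ} (P : IntervalPartition a b) :
    ∀ {i j : ℕ}, i ≤ j → j ≤ P.n → P.x i ≤ P.x j := by
  intro i j hij hj
  induction j with
  | zero =>
    have : i = 0 := Nat.le_zero.mp hij
    simp [this]
  | succ m ih =>
    rcases Nat.lt_or_ge i (m + 1) with h | h
    · have h1 : P.x i ≤ P.x m := ih (Nat.lt_succ_iff.mp h) (Nat.le_of_succ_le hj)
      have h2 : P.x m < P.x (m + 1) := P.strict m (Nat.lt_of_succ_le hj)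
      linarith
    · have : i = m + 1 := le_antisymm hij h
      simp [this]

lemma IntervalPartition.icc_subset {a b : ℝ} (P : IntervalPartition a b) {k : ℕ}
    (hk : k < P.n) : Icc (P.x k) (P.x (k + 1)) ⊆ Icc a b := by
  intro y hy
  constructor
  · calc a = P.x 0 := P.left.symm
      _ ≤ P.x k := P.x_le (Nat.zero_le k) hk.le
      _ ≤ y := hy.1
  · calc y ≤ P.x (k + 1) := hy.2
      _ ≤ P.x P.n := P.x_le (Nat.succ_le_of_lt hk) (le_refl _)
      _ = b := P.right

lemma aux_phiSup_mono {a b : ℝ} {φ : ℝ → ℝ → ℝ≥0∞} (hφ : IsPhiW φ (Set.Icc a b))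
    {A : Set ℝ} (hA : A ⊆ Set.Icc a b) {s t : ℝ} (hs : 0 ≤ s) (hst : s ≤ t) :
    phiSup φ A s ≤ phiSup φ A t :=
  iSup₂_mono fun x hx => hφ.mono x (hA hx) hs (hs.trans hst) hst

/-- Generic quasi-convexity step at the level of partition sums. -/
lemma vSum_comb_le {a b : ℝ} (φ : ℝ → ℝ → ℝ≥0∞) (c θ : ℝ) (hc : 0 ≤ c)
    (hθ0 : 0 ≤ θ) (hθ1 : θ ≤ 1)
    (H : ∀ x ∈ Set.Icc a b, ∀ t₁ t₂ r : ℝ, 0 ≤ t₁ → 0 ≤ t₂ → 0 ≤ r →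
      r ≤ θ * t₁ + (1 - θ) * t₂ →
      φ x (c * r) ≤ ENNReal.ofReal θ * φ x t₁ + ENNReal.ofReal (1 - θ) * φ x t₂)
    (f g : ℝ → ℝ) (P : IntervalPartition a b) :
    vSum φ (fun x => c * (θ * f x + (1 - θ) * g x)) P
      ≤ ENNReal.ofReal θ * vSum φ f P + ENNReal.ofReal (1 - θ) * vSum φ g P := by
  unfold vSum
  rw [Finset.mul_sum, Finset.mul_sum, ← Finset.sum_add_distrib]
  refine Finset.sum_le_sum fun k hk => ?_
  have hk' := Finset.mem_range.mp hk
  have hdpos : 0 < P.x (k + 1) - P.x k := sub_pos.mpr (P.strict k hk')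
  set y := P.x (k + 1)
  set z := P.x k
  set d := y - z with hd
  set t₁ := |f y - f z| / d with ht₁def
  set t₂ := |g y - g z| / d with ht₂def
  set r := |θ * (f y - f z) + (1 - θ) * (g y - g z)| / d with hrdef
  have harg : |c * (θ * f y + (1 - θ) * g y) - c * (θ * f z + (1 - θ) * g z)| / d
      = c * r := by
    rw [show c * (θ * f y + (1 - θ) * g y) - c * (θ * f z + (1 - θ) * g z)
        = c * (θ * (f y - f z) + (1 - θ) * (g y - g z)) by ring,
      abs_mul, abs_of_nonneg hc, mul_div_assoc]
  rw [harg]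
  have hr : r ≤ θ * t₁ + (1 - θ) * t₂ := by
    have hθθ : θ * t₁ + (1 - θ) * t₂
        = (θ * |f y - f z| + (1 - θ) * |g y - g z|) / d := by
      rw [ht₁def, ht₂def]; field_simp
    have h1 : |θ * (f y - f z) + (1 - θ) * (g y - g z)|
        ≤ θ * |f y - f z| + (1 - θ) * |g y - g z| := by
      calc |θ * (f y - f z) + (1 - θ) * (g y - g z)|
          ≤ |θ * (f y - f z)| + |(1 - θ) * (g y - g z)| := abs_add_le _ _
        _ = θ * |f y - f z| + (1 - θ) * |g y - g z| := by
            rw [abs_mul, abs_mul, abs_of_nonneg hθ0,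
              abs_of_nonneg (by linarith : (0:ℝ) ≤ 1 - θ)]
    rw [hθθ, hrdef]
    gcongr
  have hsup : phiSup φ (Icc z y) (c * r)
      ≤ ENNReal.ofReal θ * phiSup φ (Icc z y) t₁
        + ENNReal.ofReal (1 - θ) * phiSup φ (Icc z y) t₂ := by
    refine iSup₂_le fun x hx => ?_
    have hxI : x ∈ Set.Icc a b := P.icc_subset hk' hx
    refine (H x hxI t₁ t₂ r (div_nonneg (abs_nonneg _) hdpos.le)
      (div_nonneg (abs_nonneg _) hdpos.le) (div_nonneg (abs_nonneg _) hdpos.le) hr).trans ?_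
    gcongr
    · exact le_biSup (fun x => φ x t₁) hx
    · exact le_biSup (fun x => φ x t₂) hx
  calc phiSup φ (Icc z y) (c * r) * ENNReal.ofReal d
      ≤ (ENNReal.ofReal θ * phiSup φ (Icc z y) t₁
        + ENNReal.ofReal (1 - θ) * phiSup φ (Icc z y) t₂) * ENNReal.ofReal d :=
        mul_le_mul_left hsup _
    _ = ENNReal.ofReal θ * (phiSup φ (Icc z y) t₁ * ENNReal.ofReal d)
        + ENNReal.ofReal (1 - θ) * (phiSup φ (Icc z y) t₂ * ENNReal.ofReal d) := by ring

/-- The scalar inequality in the weak case, with `β = 1/(2L)`. -/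
lemma weak_scalar {a b L : ℝ} {φ : ℝ → ℝ → ℝ≥0∞} (hφ : IsPhiW φ (Set.Icc a b))
    (hL : AInc1Const φ (Set.Icc a b) L) (θ : ℝ) (hθ0 : 0 ≤ θ) (hθ1 : θ ≤ 1) :
    ∀ x ∈ Set.Icc a b, ∀ t₁ t₂ r : ℝ, 0 ≤ t₁ → 0 ≤ t₂ → 0 ≤ r →
      r ≤ θ * t₁ + (1 - θ) * t₂ →
      φ x ((1 / (2 * L)) * r) ≤ ENNReal.ofReal θ * φ x t₁
        + ENNReal.ofReal (1 - θ) * φ x t₂ := by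
  obtain ⟨hL1, haux⟩ := hL
  have hLpos : (0 : ℝ) < L := by linarith
  intro x hx t₁ t₂ r ht₁ ht₂ hr0 hrle
  rcases eq_or_lt_of_le hr0 with h0 | hrpos
  · rw [← h0, mul_zero, hφ.map_zero x hx]; exact zero_le
  have key : ∀ θ' t : ℝ, 0 ≤ θ' → θ' ≤ 1 → 0 ≤ t → r / 2 ≤ θ' * t →
      φ x ((1 / (2 * L)) * r) ≤ ENNReal.ofReal θ' * φ x t := by
    intro θ' t hθ'0 hθ'1 ht h2
    have htpos : 0 < t := by nlinarith
    set τ := (1 / (2 * L)) * r with hτdef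
    have hτpos : 0 < τ := by positivity
    have hτle : τ ≤ t := by
      have h1 : τ ≤ r / 2 := by
        have hh : (1 : ℝ) / (2 * L) ≤ 1 / 2 := by
          rw [div_le_div_iff₀ (by linarith) (by norm_num)]; linarith
        rw [hτdef]
        nlinarith
      have h2' : θ' * t ≤ t := by nlinarith
      linarith
    have h1 := haux x hx τ t hτpos hτle
    have hτne : ENNReal.ofReal τ ≠ 0 := by
      simp only [ne_eq, ENNReal.ofReal_eq_zero, not_le]; exact hτpos
    have hτtop : ENNReal.ofReal τ ≠ ⊤ := ENNReal.ofReal_ne_top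
    have htne : ENNReal.ofReal t ≠ 0 := by
      simp only [ne_eq, ENNReal.ofReal_eq_zero, not_le]; exact htpos
    have httop : ENNReal.ofReal t ≠ ⊤ := ENNReal.ofReal_ne_top
    calc φ x τ = φ x τ / ENNReal.ofReal τ * ENNReal.ofReal τ :=
          (ENNReal.div_mul_cancel hτne hτtop).symm
      _ ≤ ENNReal.ofReal L * (φ x t / ENNReal.ofReal t) * ENNReal.ofReal τ :=
          mul_le_mul_left h1 _
      _ = φ x t / ENNReal.ofReal t * ENNReal.ofReal (L * τ) := by
          rw [ENNReal.ofReal_mul hLpos.le]; ring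
      _ ≤ φ x t / ENNReal.ofReal t * ENNReal.ofReal (θ' * t) := by
          have hLτ : L * τ = r / 2 := by rw [hτdef]; field_simp
          exact mul_le_mul_right (ENNReal.ofReal_le_ofReal (by linarith)) _
      _ = ENNReal.ofReal θ' * (φ x t / ENNReal.ofReal t * ENNReal.ofReal t) := by
          rw [ENNReal.ofReal_mul hθ'0]; ring
      _ = ENNReal.ofReal θ' * φ x t := by rw [ENNReal.div_mul_cancel htne httop]
  have hcase : r / 2 ≤ θ * t₁ ∨ r / 2 ≤ (1 - θ) * t₂ := by
    by_contra hcon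
    push_neg at hcon
    linarith [hcon.1, hcon.2]
  rcases hcase with h | h
  · exact (key θ t₁ hθ0 hθ1 ht₁ h).trans le_self_add
  · exact (key (1 - θ) t₂ (by linarith) (by linarith) ht₂ h).trans le_add_self

/-- Generic quasi-convexity step for the Riesz variation. -/
lemma rieszVar_comb_le {a b : ℝ} (φ : ℝ → ℝ → ℝ≥0∞) (c θ : ℝ) (hc : 0 ≤ c)
    (hθ0 : 0 ≤ θ) (hθ1 : θ ≤ 1)
    (H : ∀ x ∈ Set.Icc a b, ∀ t₁ t₂ r : ℝ, 0 ≤ t₁ → 0 ≤ t₂ → 0 ≤ r →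
      r ≤ θ * t₁ + (1 - θ) * t₂ →
      φ x (c * r) ≤ ENNReal.ofReal θ * φ x t₁ + ENNReal.ofReal (1 - θ) * φ x t₂)
    (f g : ℝ → ℝ) :
    rieszVar φ a b (fun x => c * (θ * f x + (1 - θ) * g x))
      ≤ ENNReal.ofReal θ * rieszVar φ a b f
        + ENNReal.ofReal (1 - θ) * rieszVar φ a b g := by
  refine iSup_le fun P => (vSum_comb_le φ c θ hc hθ0 hθ1 H f g P).trans ?_
  gcongr
  · exact le_iSup _ P
  · exact le_iSup _ P

end AuxLemmas

/-- Lemma 3.5.  `V^φ_I` is a quasi-semimodular on `ℝ^I` with quasi-convexity constant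
`β = 1/(2L)`; if `φ ∈ Φ_c(I)` then `V^φ_I` is a semimodular (convex). -/
theorem riesz_variation_quasi_semimodular (a b : ℝ) (hab : a < b)
    (φ : ℝ → ℝ → ℝ≥0∞) (hφ : IsPhiW φ (Set.Icc a b))
    (L : ℝ) (hL : AInc1Const φ (Set.Icc a b) L) :
    (∀ f : ℝ → ℝ,
      MonotoneOn (fun lam : ℝ => rieszVar φ a b fun x => lam * f x) (Set.Ici 0)) ∧
    rieszVar φ a b (fun _ => 0) = 0 ∧
    (∀ f : ℝ → ℝ, rieszVar φ a b (fun x => -f x) = rieszVar φ a b f) ∧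
    (∀ f g : ℝ → ℝ, ∀ θ : ℝ, 0 ≤ θ → θ ≤ 1 →
      rieszVar φ a b (fun x => (1 / (2 * L)) * (θ * f x + (1 - θ) * g x))
        ≤ ENNReal.ofReal θ * rieszVar φ a b f
          + ENNReal.ofReal (1 - θ) * rieszVar φ a b g) ∧
    (IsPhiCx φ (Set.Icc a b) → ∀ f g : ℝ → ℝ, ∀ θ : ℝ, 0 ≤ θ → θ ≤ 1 →
      rieszVar φ a b (fun x => θ * f x + (1 - θ) * g x)
        ≤ ENNReal.ofReal θ * rieszVar φ a b f
          + ENNReal.ofReal (1 - θ) * rieszVar φ a b g) := by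
  refine ⟨?_, ?_, ?_, ?_, ?_⟩
  · -- monotonicity in `lam`
    intro f l₁ hl₁ l₂ _ h12
    refine iSup_mono fun P => Finset.sum_le_sum fun k hk => ?_
    have hk' := Finset.mem_range.mp hk
    have hdpos : 0 < P.x (k + 1) - P.x k := sub_pos.mpr (P.strict k hk')
    have hl₁' : (0 : ℝ) ≤ l₁ := hl₁
    have habs : ∀ l : ℝ, 0 ≤ l →
        |l * f (P.x (k + 1)) - l * f (P.x k)| = l * |f (P.x (k + 1)) - f (P.x k)| := by
      intro l hl
      rw [← mul_sub, abs_mul, abs_of_nonneg hl]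
    refine mul_le_mul_left ?_ _
    rw [habs l₁ hl₁', habs l₂ (hl₁'.trans h12)]
    refine aux_phiSup_mono hφ (P.icc_subset hk') ?_ ?_
    · positivity
    · gcongr
  · -- value at 0
    refine le_antisymm (iSup_le fun P => ?_) zero_le
    refine le_of_eq (Finset.sum_eq_zero fun k hk => ?_)
    have hk' := Finset.mem_range.mp hk
    have h0 : |(0 : ℝ) - 0| / (P.x (k + 1) - P.x k) = 0 := by simp
    rw [h0]
    have hps : phiSup φ (Set.Icc (P.x k) (P.x (k + 1))) 0 = 0 := by
      refine le_antisymm (iSup₂_le fun x hx => ?_) zero_le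
      rw [hφ.map_zero x (P.icc_subset hk' hx)]
    rw [hps, zero_mul]
  · -- symmetry
    intro f
    refine iSup_congr fun P => Finset.sum_congr rfl fun k _ => ?_
    have : |-f (P.x (k + 1)) - -f (P.x k)| = |f (P.x (k + 1)) - f (P.x k)| := by
      rw [show -f (P.x (k + 1)) - -f (P.x k) = -(f (P.x (k + 1)) - f (P.x k)) by ring,
        abs_neg]
    rw [this]
  · -- quasi-convexity with β = 1/(2L)
    intro f g θ hθ0 hθ1
    have hL1 : (1 : ℝ) ≤ L := hL.1
    exact rieszVar_comb_le φ (1 / (2 * L)) θ (by positivity) hθ0 hθ1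
      (weak_scalar hφ hL θ hθ0 hθ1) f g
  · -- convexity in the convex case
    intro hcx f g θ hθ0 hθ1
    have H : ∀ x ∈ Set.Icc a b, ∀ t₁ t₂ r : ℝ, 0 ≤ t₁ → 0 ≤ t₂ → 0 ≤ r →
        r ≤ θ * t₁ + (1 - θ) * t₂ →
        φ x ((1 : ℝ) * r) ≤ ENNReal.ofReal θ * φ x t₁
          + ENNReal.ofReal (1 - θ) * φ x t₂ := by
      intro x hx t₁ t₂ r ht₁ ht₂ hr0 hrle
      rw [one_mul]
      have hsum : (0:ℝ) ≤ θ * t₁ + (1 - θ) * t₂ :=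
        add_nonneg (mul_nonneg hθ0 ht₁) (mul_nonneg (by linarith) ht₂)
      calc φ x r ≤ φ x (θ * t₁ + (1 - θ) * t₂) :=
            hφ.mono x hx hr0 hsum hrle
        _ ≤ ENNReal.ofReal θ * φ x t₁ + ENNReal.ofReal (1 - θ) * φ x t₂ :=
            hcx.convex x hx t₁ t₂ θ ht₁ ht₂ hθ0 hθ1
    have := rieszVar_comb_le φ 1 θ zero_le_one hθ0 hθ1 H f g
    simpa using this
end

section
/- Let I=[a,b]⊂ℝ be a closed nondegenerate interval and φ∈Φ_w(I). Then RBV_0^φ(I) equipped with the Luxemburg quasi-seminorm ‖f‖_{RBV^φ(I)} = inf{λ>0 : V^φ_I(f/λ)≤1} is a quasi-normed space (in particular ‖f‖_{RBV^φ(I)}=0 implies f=0 for f∈RBV_0^φ(I)); moreover RBV_0^φ(I) contains a nonzero function if and only if φ⁺_I is non-degenerate, i.e. φ⁺_I(t_0)<∞ for some t_0>0. -/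
open MeasureTheory Filter Set
open scoped ENNReal

section Aux
open MeasureTheory Filter Set
open scoped ENNReal

lemma IntervalPartition.mono' {a b : ℝ} (P : IntervalPartition a b) :
    ∀ j ≤ P.n, ∀ i ≤ j, P.x i ≤ P.x j := by
  intro j hj
  induction j with
  | zero => intro i hi; simp [Nat.le_zero.mp hi]
  | succ m ih =>
      intro i hi
      rcases Nat.lt_or_ge i (m+1) with h | h
      · exact le_trans (ih (by omega) i (by omega)) (P.strict m (by omega)).le
      · have : i = m + 1 := by omega
        simp [this]

lemma IntervalPartition.mem_Icc' {a b : ℝ} (P : IntervalPartition a b) {k : ℕ} (hk : k ≤ P.n) :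
    P.x k ∈ Icc a b := by
  constructor
  · have := P.mono' k hk 0 (Nat.zero_le _); rwa [P.left] at this
  · have := P.mono' P.n le_rfl k hk; rwa [P.right] at this

lemma exists_part {a b c d : ℝ} (hab : a < b) (hac : a ≤ c) (hcd : c < d) (hdb : d ≤ b) :
    ∃ (P : IntervalPartition a b) (k : ℕ), k < P.n ∧ P.x k = c ∧ P.x (k + 1) = d := by
  rcases eq_or_lt_of_le hac with h1 | h1 <;> rcases eq_or_lt_of_le hdb with h2 | h2
  · exact ⟨⟨1, one_pos, fun k => if k = 0 then a else b, by simp, by simp, by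
      intro i hi; interval_cases i; simpa [← h1, h2] using hcd⟩, 0, by simp [← h1, h2]⟩
  · refine ⟨⟨2, two_pos, fun k => if k = 0 then a else if k = 1 then d else b, by simp, by simp, ?_⟩,
      0, by simp [← h1]⟩
    intro i hi; interval_cases i
    · simpa [← h1] using hcd
    · simpa using h2
  · refine ⟨⟨2, two_pos, fun k => if k = 0 then a else if k = 1 then c else b, by simp, by simp, ?_⟩,
      1, by simp [h2]⟩
    intro i hi; interval_cases i
    · simpa using h1
    · simpa [h2] using hcd.trans_le hdb
  · refine ⟨⟨3, three_pos, fun k => if k = 0 then a else if k = 1 then c else if k = 2 then d else b,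
      by simp, by simp, ?_⟩, 1, by simp⟩
    intro i hi; interval_cases i
    · simpa using h1
    · simpa using hcd
    · simpa using h2

lemma rieszVar_ge {a b c d : ℝ} (hab : a < b) (hac : a ≤ c) (hcd : c < d) (hdb : d ≤ b)
    (φ : ℝ → ℝ → ℝ≥0∞) (g : ℝ → ℝ) :
    phiSup φ (Icc c d) (|g d - g c| / (d - c)) * ENNReal.ofReal (d - c) ≤ rieszVar φ a b g := by
  obtain ⟨P, k, hk, hc, hd⟩ := exists_part hab hac hcd hdb
  refine le_trans ?_ (le_iSup _ P)
  calc phiSup φ (Icc c d) (|g d - g c| / (d - c)) * ENNReal.ofReal (d - c)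
      = phiSup φ (Icc (P.x k) (P.x (k+1)))
          (|g (P.x (k+1)) - g (P.x k)| / (P.x (k+1) - P.x k)) *
          ENNReal.ofReal (P.x (k+1) - P.x k) := by rw [hc, hd]
    _ ≤ vSum φ g P := Finset.single_le_sum
        (f := fun k => phiSup φ (Icc (P.x k) (P.x (k+1)))
          (|g (P.x (k+1)) - g (P.x k)| / (P.x (k+1) - P.x k)) *
          ENNReal.ofReal (P.x (k+1) - P.x k))
        (fun i _ => zero_le) (Finset.mem_range.mpr hk)

lemma phiSup_le_of_mem {φ : ℝ → ℝ → ℝ≥0∞} {A : Set ℝ} {t : ℝ} {y : ℝ} (hy : y ∈ A) :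
    φ y t ≤ phiSup φ A t := le_iSup₂ (f := fun x (_ : x ∈ A) => φ x t) y hy

lemma phiSup_mono {φ : ℝ → ℝ → ℝ≥0∞} {A B : Set ℝ} (h : A ⊆ B) (t : ℝ) :
    phiSup φ A t ≤ phiSup φ B t :=
  iSup₂_le fun x hx => phiSup_le_of_mem (h hx)

end Aux
section Main
open MeasureTheory Filter Set
open scoped ENNReal

lemma part1 (a b : ℝ) (hab : a < b) (φ : ℝ → ℝ → ℝ≥0∞) (hφ : IsPhiW φ (Set.Icc a b)) :
    ∀ f : ℝ → ℝ, MemRBV φ a b f → f a = 0 → rbvNorm φ a b f = 0 →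
      ∀ x ∈ Set.Icc a b, f x = 0 := by
  intro f hmem hfa hnorm x hx
  by_contra hfx
  have hax : a < x := by
    rcases eq_or_lt_of_le hx.1 with h | h
    · exact absurd (h ▸ hfa) hfx
    · exact h
  set δ := x - a with hδ
  have hδ0 : 0 < δ := by simp [hδ]; linarith
  have hδne : ENNReal.ofReal δ ≠ 0 := (ENNReal.ofReal_pos.mpr hδ0).ne'
  set M : ℝ≥0∞ := 1 / ENNReal.ofReal δ with hM
  have hMlt : M < ⊤ := ENNReal.div_lt_top ENNReal.one_ne_top hδne
  -- φ a t > M for t large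
  have htop := hφ.tendsto_top a (left_mem_Icc.mpr hab.le)
  have hev : ∀ᶠ t in atTop, M < φ a t := htop.eventually (eventually_gt_nhds hMlt)
  obtain ⟨T, hT⟩ := hev.exists_forall_of_atTop
  -- the set in the Luxemburg norm is nonempty
  have hS : {lam : ℝ | 0 < lam ∧ rieszVar φ a b (fun y => f y / lam) ≤ 1}.Nonempty := by
    have h1 : ∀ᶠ lam in nhdsWithin (0:ℝ) (Ioi 0),
        rieszVar φ a b (fun y => lam * f y) < 1 := hmem (Iio_mem_nhds one_pos)
    obtain ⟨μ, hμ1, hμpos⟩ := (h1.and (eventually_mem_nhdsWithin)).exists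
    have hμ0 : 0 < μ := hμpos
    refine ⟨1/μ, by positivity, ?_⟩
    have : (fun y => f y / (1/μ)) = fun y => μ * f y := by
      funext y; field_simp
    rw [this]
    exact hμ1.le
  set T' := max T 1 with hT'
  have hT'0 : 0 < T' := lt_of_lt_of_le one_pos (le_max_right _ _)
  have hε : 0 < |f x| / (δ * T') := by positivity
  have hbdd : BddBelow {lam : ℝ | 0 < lam ∧ rieszVar φ a b (fun y => f y / lam) ≤ 1} :=
    ⟨0, fun y hy => hy.1.le⟩
  have : sInf {lam : ℝ | 0 < lam ∧ rieszVar φ a b (fun y => f y / lam) ≤ 1} < |f x| / (δ * T') := by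
    rw [← rbvNorm] at *; rw [hnorm]; exact hε
  obtain ⟨lam, ⟨hlam0, hlamV⟩, hlamlt⟩ := (csInf_lt_iff hbdd hS).mp this
  -- the key term
  have hkey := rieszVar_ge hab le_rfl hax hx.2 φ (fun y => f y / lam)
  have harg : |f x / lam - f a / lam| / (x - a) = |f x| / lam / δ := by
    rw [hfa, zero_div, sub_zero, abs_div, abs_of_pos hlam0]
  have hTlt : T < |f x| / lam / δ := by
    have h1 : lam * (δ * T') < |f x| := by
      rw [lt_div_iff₀ (by positivity)] at hlamlt; linarith [hlamlt]
    have h2 : T' < |f x| / lam / δ := by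
      rw [lt_div_iff₀ hδ0, lt_div_iff₀ hlam0]; nlinarith
    exact lt_of_le_of_lt (le_max_left _ _) h2
  have hφa : M < φ a (|f x / lam - f a / lam| / (x - a)) := by
    rw [harg]; exact hT _ (le_of_lt hTlt)
  have hle : φ a (|f x / lam - f a / lam| / (x - a)) ≤
      phiSup φ (Icc a x) (|f x / lam - f a / lam| / (x - a)) :=
    phiSup_le_of_mem (left_mem_Icc.mpr hax.le)
  have hgt : 1 < phiSup φ (Icc a x) (|f x / lam - f a / lam| / (x - a)) * ENNReal.ofReal (x - a) := by
    have : M * ENNReal.ofReal δ <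
        phiSup φ (Icc a x) (|f x / lam - f a / lam| / (x - a)) * ENNReal.ofReal δ :=
      by have := ENNReal.mul_lt_mul_right hδne ENNReal.ofReal_ne_top (lt_of_lt_of_le hφa hle)
         rwa [mul_comm, mul_comm (ENNReal.ofReal δ)] at this
    rwa [hM, one_div, ENNReal.inv_mul_cancel hδne ENNReal.ofReal_ne_top] at this
  exact absurd (le_trans hkey hlamV) (not_le.mpr hgt)

end Main
section Main2
open MeasureTheory Filter Set
open scoped ENNReal

lemma part2rev (a b : ℝ) (hab : a < b) (φ : ℝ → ℝ → ℝ≥0∞) (hφ : IsPhiW φ (Set.Icc a b))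
    (t₀ : ℝ) (ht₀ : 0 < t₀) (hfin : phiSup φ (Set.Icc a b) t₀ < ⊤) :
    ∃ f : ℝ → ℝ, MemRBV φ a b f ∧ f a = 0 ∧ ∃ x ∈ Set.Icc a b, f x ≠ 0 := by
  obtain ⟨L, hL1, hL⟩ := hφ.aInc1
  refine ⟨fun y => y - a, ?_, by simp, b, right_mem_Icc.mpr hab.le, by simp; linarith⟩
  set C : ℝ≥0∞ := ENNReal.ofReal L * (phiSup φ (Set.Icc a b) t₀ / ENNReal.ofReal t₀) *
    ENNReal.ofReal (b - a) with hC
  have hCne : C ≠ ⊤ := by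
    apply ENNReal.mul_ne_top (ENNReal.mul_ne_top ENNReal.ofReal_ne_top _) ENNReal.ofReal_ne_top
    exact (ENNReal.div_lt_top hfin.ne (ENNReal.ofReal_pos.mpr ht₀).ne').ne
  -- key bound: for 0 < lam ≤ t₀, rieszVar ≤ C * ofReal lam
  have hbound : ∀ lam : ℝ, 0 < lam → lam ≤ t₀ →
      rieszVar φ a b (fun y => lam * (y - a)) ≤ C * ENNReal.ofReal lam := by
    intro lam hlam hlamle
    have hlamne : ENNReal.ofReal lam ≠ 0 := (ENNReal.ofReal_pos.mpr hlam).ne'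
    have hsup : phiSup φ (Set.Icc a b) lam ≤
        ENNReal.ofReal L * (phiSup φ (Set.Icc a b) t₀ / ENNReal.ofReal t₀) *
          ENNReal.ofReal lam := by
      refine iSup₂_le fun y hy => ?_
      have h1 := hL y hy lam t₀ hlam hlamle
      have h2 : φ y lam ≤ ENNReal.ofReal L * (φ y t₀ / ENNReal.ofReal t₀) * ENNReal.ofReal lam :=
        (ENNReal.div_le_iff_le_mul (Or.inl hlamne) (Or.inl ENNReal.ofReal_ne_top)).mp h1
      refine h2.trans (mul_le_mul_left (mul_le_mul_right ?_ _) _)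
      exact ENNReal.div_le_div_right (phiSup_le_of_mem hy) _
    refine iSup_le fun P => ?_
    have hterm : ∀ k ∈ Finset.range P.n,
        phiSup φ (Icc (P.x k) (P.x (k + 1)))
          (|lam * (P.x (k + 1) - a) - lam * (P.x k - a)| / (P.x (k + 1) - P.x k)) *
          ENNReal.ofReal (P.x (k + 1) - P.x k) ≤
        phiSup φ (Set.Icc a b) lam * ENNReal.ofReal (P.x (k + 1) - P.x k) := by
      intro k hk
      rw [Finset.mem_range] at hk
      have hlen : 0 < P.x (k + 1) - P.x k := by linarith [P.strict k hk]
      have harg : |lam * (P.x (k + 1) - a) - lam * (P.x k - a)| / (P.x (k + 1) - P.x k) = lam := by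
        rw [show lam * (P.x (k + 1) - a) - lam * (P.x k - a) = lam * (P.x (k+1) - P.x k) by ring,
          abs_mul, abs_of_pos hlam, abs_of_pos hlen, mul_div_assoc, div_self hlen.ne', mul_one]
      rw [harg]
      refine mul_le_mul_left (phiSup_mono ?_ lam) _
      exact Icc_subset_Icc (P.mem_Icc' hk.le).1 (P.mem_Icc' hk).2
    calc vSum φ (fun y => lam * (y - a)) P
        ≤ ∑ k ∈ Finset.range P.n,
            phiSup φ (Set.Icc a b) lam * ENNReal.ofReal (P.x (k + 1) - P.x k) :=
          Finset.sum_le_sum hterm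
      _ = phiSup φ (Set.Icc a b) lam *
            ∑ k ∈ Finset.range P.n, ENNReal.ofReal (P.x (k + 1) - P.x k) := by
          rw [Finset.mul_sum]
      _ = phiSup φ (Set.Icc a b) lam * ENNReal.ofReal (b - a) := by
          congr 1
          rw [← ENNReal.ofReal_sum_of_nonneg]
          · rw [Finset.sum_range_sub P.x, P.left, P.right]
          · intro k hk
            rw [Finset.mem_range] at hk
            linarith [P.strict k hk]
      _ ≤ ENNReal.ofReal L * (phiSup φ (Set.Icc a b) t₀ / ENNReal.ofReal t₀) *
            ENNReal.ofReal lam * ENNReal.ofReal (b - a) :=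
          mul_le_mul_left hsup _
      _ = C * ENNReal.ofReal lam := by rw [hC]; ring
  -- conclude tendsto
  unfold MemRBV
  have hupper : Tendsto (fun lam : ℝ => C * ENNReal.ofReal lam)
      (nhdsWithin (0:ℝ) (Ioi 0)) (nhds 0) := by
    have h1 : Tendsto (fun lam : ℝ => ENNReal.ofReal lam) (nhdsWithin (0:ℝ) (Ioi 0))
        (nhds 0) := by
      have := (ENNReal.continuous_ofReal.tendsto 0).mono_left
        (nhdsWithin_le_nhds (s := Ioi (0:ℝ)))
      simpa using this
    have := ENNReal.Tendsto.const_mul h1 (Or.inr hCne)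
    simpa using this
  refine tendsto_of_tendsto_of_tendsto_of_le_of_le' tendsto_const_nhds hupper
    (Eventually.of_forall fun lam => zero_le) ?_
  have h2 : ∀ᶠ lam in nhdsWithin (0:ℝ) (Ioi 0), lam < t₀ :=
    mem_nhdsWithin_of_mem_nhds (Iio_mem_nhds ht₀)
  filter_upwards [h2, eventually_mem_nhdsWithin] with lam hlt hmem
  exact hbound lam hmem hlt.le

end Main2
section Main3
open MeasureTheory Filter Set
open scoped ENNReal

lemma part2fwd (a b : ℝ) (hab : a < b) (φ : ℝ → ℝ → ℝ≥0∞) (hφ : IsPhiW φ (Set.Icc a b))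
    (f : ℝ → ℝ) (hmem : MemRBV φ a b f) (hfa : f a = 0)
    (x₀ : ℝ) (hx₀ : x₀ ∈ Set.Icc a b) (hfx₀ : f x₀ ≠ 0) :
    ∃ t₀ : ℝ, 0 < t₀ ∧ phiSup φ (Set.Icc a b) t₀ < ⊤ := by
  obtain ⟨L, hL1, hL⟩ := hφ.aInc1
  have hax₀ : a < x₀ := by
    rcases eq_or_lt_of_le hx₀.1 with h | h
    · exact absurd (h ▸ hfa) hfx₀
    · exact h
  set c₀ := |f x₀| with hc₀def
  have hc₀ : 0 < c₀ := abs_pos.mpr hfx₀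
  -- find lam > 0 with V(lam f) ≤ 1
  have hev1 : ∀ᶠ lam in nhdsWithin (0:ℝ) (Ioi 0),
      rieszVar φ a b (fun x => lam * f x) < 1 := hmem (Iio_mem_nhds zero_lt_one)
  obtain ⟨lam, hV1, hlam⟩ := (hev1.and eventually_mem_nhdsWithin).exists
  have hlam0 : 0 < lam := hlam
  have hV : rieszVar φ a b (fun y => lam * f y) ≤ 1 := hV1.le
  set t₀ := lam * c₀ / (2 * (b - a)) with ht₀def
  have ht₀ : 0 < t₀ := by apply div_pos (by positivity); linarith
  refine ⟨t₀, ht₀, ?_⟩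
  set M : ℝ≥0∞ := ENNReal.ofReal L * (ENNReal.ofReal (lam * c₀ / 2))⁻¹ * ENNReal.ofReal t₀
    with hMdef
  have hMne : M < ⊤ := by
    rw [hMdef]
    apply ENNReal.mul_lt_top (ENNReal.mul_lt_top ENNReal.ofReal_lt_top _) ENNReal.ofReal_lt_top
    rw [ENNReal.inv_lt_top]
    apply ENNReal.ofReal_pos.mpr
    positivity
  refine lt_of_le_of_lt (iSup₂_le fun y hy => ?_) hMne
  -- find interval [c,d] containing y with big increment
  obtain ⟨c, d, hac, hcd, hdb, hyc, hyd, hr⟩ :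
      ∃ c d : ℝ, a ≤ c ∧ c < d ∧ d ≤ b ∧ c ≤ y ∧ y ≤ d ∧ c₀ / 2 ≤ |f d - f c| := by
    rcases le_or_gt (c₀ / 2) (|f y|) with h | h
    · have hya : a < y := by
        rcases eq_or_lt_of_le hy.1 with h' | h'
        · exfalso; rw [← h', hfa] at h; simp at h; linarith
        · exact h'
      exact ⟨a, y, le_rfl, hya, hy.2, hya.le, le_rfl, by rw [hfa, sub_zero]; exact h⟩
    · have hinc : c₀ / 2 ≤ |f x₀ - f y| := by
        have := abs_sub_abs_le_abs_sub (f x₀) (f y)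
        rw [← hc₀def] at this; linarith
      rcases lt_trichotomy y x₀ with h' | h' | h'
      · exact ⟨y, x₀, hy.1, h', hx₀.2, le_rfl, h'.le, hinc⟩
      · exfalso; rw [h'] at h; rw [← hc₀def] at h; linarith
      · exact ⟨x₀, y, hx₀.1, h', hy.2, h'.le, le_rfl, by rw [abs_sub_comm]; exact hinc⟩
  set ℓ := d - c with hℓdef
  have hℓ0 : 0 < ℓ := by simp [hℓdef]; linarith
  have hℓle : ℓ ≤ b - a := by simp [hℓdef]; linarith
  set r := |f d - f c| with hrdef
  have hr0 : 0 < r := lt_of_lt_of_le (by positivity) hr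
  set ty := lam * r / ℓ with htydef
  have hty0 : 0 < ty := by positivity
  have ht₀ty : t₀ ≤ ty := by
    rw [ht₀def, htydef, div_le_div_iff₀ (by linarith) hℓ0]
    have e1 : lam * c₀ * ℓ ≤ lam * (2 * r) * ℓ :=
      mul_le_mul_of_nonneg_right (mul_le_mul_of_nonneg_left (by linarith) hlam0.le) hℓ0.le
    have e2 : lam * (2 * r) * ℓ ≤ lam * (2 * r) * (b - a) :=
      mul_le_mul_of_nonneg_left hℓle (by positivity)
    nlinarith [e1, e2]
  -- the partition bound
  have hkey := (rieszVar_ge hab hac hcd hdb φ (fun y => lam * f y)).trans hV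
  have harg : |lam * f d - lam * f c| / (d - c) = ty := by
    rw [show lam * f d - lam * f c = lam * (f d - f c) by ring, abs_mul, abs_of_pos hlam0,
      htydef, hrdef, hℓdef]
  rw [harg] at hkey
  have hℓne : ENNReal.ofReal ℓ ≠ 0 := (ENNReal.ofReal_pos.mpr hℓ0).ne'
  have hsup_le : phiSup φ (Icc c d) ty ≤ 1 / ENNReal.ofReal ℓ :=
    (ENNReal.le_div_iff_mul_le (Or.inl hℓne) (Or.inl ENNReal.ofReal_ne_top)).mpr hkey
  have hφy : φ y ty ≤ 1 / ENNReal.ofReal ℓ :=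
    (phiSup_le_of_mem (show y ∈ Icc c d from ⟨hyc, hyd⟩)).trans hsup_le
  -- aInc1
  have h1 := hL y hy t₀ ty ht₀ ht₀ty
  have ht₀ne : ENNReal.ofReal t₀ ≠ 0 := (ENNReal.ofReal_pos.mpr ht₀).ne'
  have h2 : φ y t₀ ≤ ENNReal.ofReal L * (φ y ty / ENNReal.ofReal ty) * ENNReal.ofReal t₀ :=
    (ENNReal.div_le_iff_le_mul (Or.inl ht₀ne) (Or.inl ENNReal.ofReal_ne_top)).mp h1
  refine h2.trans ?_
  rw [hMdef]
  refine mul_le_mul_left (mul_le_mul_right ?_ _) _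
  -- φ y ty / ofReal ty ≤ (ofReal (lam * c₀ / 2))⁻¹
  calc φ y ty / ENNReal.ofReal ty
      ≤ (1 / ENNReal.ofReal ℓ) / ENNReal.ofReal ty := ENNReal.div_le_div_right hφy _
    _ = (ENNReal.ofReal (ℓ * ty))⁻¹ := by
        rw [one_div, div_eq_mul_inv, ← ENNReal.mul_inv (Or.inl hℓne)
          (Or.inr (ENNReal.ofReal_pos.mpr hty0).ne'), ENNReal.ofReal_mul hℓ0.le]
    _ = (ENNReal.ofReal (lam * r))⁻¹ := by
        congr 1; rw [htydef]; field_simp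
    _ ≤ (ENNReal.ofReal (lam * c₀ / 2))⁻¹ := by
        apply ENNReal.inv_le_inv.mpr
        apply ENNReal.ofReal_le_ofReal
        nlinarith

end Main3
/-- Theorem 3.6.  `RBV_0^φ(I)` with the Luxemburg quasi-seminorm is a quasi-normed space
(the quasi-seminorm vanishes only at `0`), and it is non-trivial iff `φ⁺_I` is
non-degenerate, i.e. `φ⁺_I(t₀) < ∞` for some `t₀ > 0`. -/
theorem rbv_zero_quasi_normed (a b : ℝ) (hab : a < b)
    (φ : ℝ → ℝ → ℝ≥0∞) (hφ : IsPhiW φ (Set.Icc a b)) :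
    (∀ f : ℝ → ℝ, MemRBV φ a b f → f a = 0 → rbvNorm φ a b f = 0 →
      ∀ x ∈ Set.Icc a b, f x = 0) ∧
    ((∃ f : ℝ → ℝ, MemRBV φ a b f ∧ f a = 0 ∧ ∃ x ∈ Set.Icc a b, f x ≠ 0) ↔
      ∃ t₀ : ℝ, 0 < t₀ ∧ phiSup φ (Set.Icc a b) t₀ < ⊤) := by
  refine ⟨part1 a b hab φ hφ, ?_, ?_⟩
  · rintro ⟨f, hmem, hfa, x₀, hx₀, hfx₀⟩
    exact part2fwd a b hab φ hφ f hmem hfa x₀ hx₀ hfx₀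
  · rintro ⟨t₀, ht₀, hfin⟩
    exact part2rev a b hab φ hφ t₀ ht₀ hfin
end

section
/- Let I=[a,b]⊂ℝ be a closed nondegenerate interval and φ,ψ∈Φ_w(I). Suppose there exists K>0 such that ψ(x,t/K) ≤ φ(x,t)+1 for every x∈I and t≥0. Then RBV^φ(I) ⊆ RBV^ψ(I) and the embedding is bounded: ‖f‖_{RBV^ψ(I)} ≤ L K (1+|I|) ‖f‖_{RBV^φ(I)} for every f∈RBV^φ(I), where L is the almost-increasing constant of ψ. -/
open MeasureTheory Filter Set
open scoped ENNReal

section RbvEmbeddingAux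

private lemma IntervalPartition.x_mono' {a b : ℝ} (P : IntervalPartition a b)
    {i j : ℕ} (hij : i ≤ j) (hj : j ≤ P.n) : P.x i ≤ P.x j := by
  induction j with
  | zero =>
    obtain rfl := Nat.le_zero.mp hij
    exact le_rfl
  | succ j ih =>
    rcases Nat.eq_or_lt_of_le hij with h | h
    · rw [h]
    · exact (ih (Nat.lt_succ_iff.mp h) (le_of_lt (Nat.lt_of_succ_le hj))).trans
        (P.strict j (Nat.lt_of_succ_le hj)).le

private lemma IntervalPartition.sub_subset {a b : ℝ} (P : IntervalPartition a b)
    {k : ℕ} (hk : k < P.n) : Set.Icc (P.x k) (P.x (k + 1)) ⊆ Set.Icc a b := by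
  have h1 := P.x_mono' (Nat.zero_le k) hk.le
  have h2 := P.x_mono' hk (le_refl P.n)
  rw [P.left] at h1
  rw [P.right] at h2
  exact Set.Icc_subset_Icc h1 h2

private lemma IntervalPartition.len_sum {a b : ℝ} (P : IntervalPartition a b) :
    ∑ k ∈ Finset.range P.n, ENNReal.ofReal (P.x (k + 1) - P.x k)
      = ENNReal.ofReal (b - a) := by
  rw [← ENNReal.ofReal_sum_of_nonneg
    (fun k hk => sub_nonneg.mpr (P.strict k (Finset.mem_range.mp hk)).le)]
  rw [Finset.sum_range_sub (f := P.x), P.left, P.right]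

private lemma rbv_key1 {a b K : ℝ} (hK : 0 < K) {φ ψ : ℝ → ℝ → ℝ≥0∞}
    (hcomp : ∀ x ∈ Set.Icc a b, ∀ t : ℝ, 0 ≤ t → ψ x (t / K) ≤ φ x t + 1)
    (g : ℝ → ℝ) :
    rieszVar ψ a b (fun x => g x / K) ≤ rieszVar φ a b g + ENNReal.ofReal (b - a) := by
  refine iSup_le fun P => ?_
  have step : vSum ψ (fun x => g x / K) P ≤ vSum φ g P + ENNReal.ofReal (b - a) := by
    rw [vSum, vSum, ← P.len_sum, ← Finset.sum_add_distrib]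
    refine Finset.sum_le_sum fun k hk => ?_
    have hkn := Finset.mem_range.mp hk
    have hlen : 0 < P.x (k + 1) - P.x k := sub_pos.mpr (P.strict k hkn)
    have harg : |g (P.x (k + 1)) / K - g (P.x k) / K| / (P.x (k + 1) - P.x k)
        = (|g (P.x (k + 1)) - g (P.x k)| / (P.x (k + 1) - P.x k)) / K := by
      rw [div_sub_div_same, abs_div, abs_of_pos hK, div_div, div_div, mul_comm]
    have hsup : phiSup ψ (Set.Icc (P.x k) (P.x (k + 1)))
        (|g (P.x (k + 1)) / K - g (P.x k) / K| / (P.x (k + 1) - P.x k))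
        ≤ phiSup φ (Set.Icc (P.x k) (P.x (k + 1)))
            (|g (P.x (k + 1)) - g (P.x k)| / (P.x (k + 1) - P.x k)) + 1 := by
      rw [harg]
      refine iSup₂_le fun x hx => ?_
      have hxI : x ∈ Set.Icc a b := P.sub_subset hkn hx
      refine (hcomp x hxI _ (div_nonneg (abs_nonneg _) hlen.le)).trans
        (add_le_add_left ?_ 1)
      exact le_iSup₂ (f := fun x (_ : x ∈ Set.Icc (P.x k) (P.x (k + 1))) =>
        φ x (|g (P.x (k + 1)) - g (P.x k)| / (P.x (k + 1) - P.x k))) x hx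
    refine le_trans (mul_le_mul_left hsup _) (le_of_eq ?_)
    rw [add_mul, one_mul]
  exact step.trans (add_le_add_left (le_iSup _ P) _)

private lemma rbv_key2 {a b L : ℝ} {ψ : ℝ → ℝ → ℝ≥0∞}
    (hψ0 : ∀ x ∈ Set.Icc a b, ψ x 0 = 0)
    (hL : AInc1Const ψ (Set.Icc a b) L)
    {ε : ℝ} (hε : 0 < ε) (hε1 : ε ≤ 1) (g : ℝ → ℝ) :
    rieszVar ψ a b (fun x => ε * g x) ≤ ENNReal.ofReal (L * ε) * rieszVar ψ a b g := by
  have hL1 : (1 : ℝ) ≤ L := hL.1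
  refine iSup_le fun P => le_trans ?_ (mul_le_mul_right (le_iSup _ P) _)
  rw [vSum, vSum, Finset.mul_sum]
  refine Finset.sum_le_sum fun k hk => ?_
  have hkn := Finset.mem_range.mp hk
  have hlen : 0 < P.x (k + 1) - P.x k := sub_pos.mpr (P.strict k hkn)
  rw [← mul_assoc]
  refine mul_le_mul_left ?_ _
  set s : ℝ := |g (P.x (k + 1)) - g (P.x k)| / (P.x (k + 1) - P.x k) with hs
  have harg : |ε * g (P.x (k + 1)) - ε * g (P.x k)| / (P.x (k + 1) - P.x k) = ε * s := by
    rw [← mul_sub, abs_mul, abs_of_pos hε, hs, mul_div_assoc]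
  show phiSup ψ _ _ ≤ _
  rw [harg]
  refine iSup₂_le fun x hx => ?_
  have hxI : x ∈ Set.Icc a b := P.sub_subset hkn hx
  have hsup : ψ x s ≤ phiSup ψ (Set.Icc (P.x k) (P.x (k + 1))) s :=
    le_iSup₂ (f := fun x (_ : x ∈ Set.Icc (P.x k) (P.x (k + 1))) => ψ x s) x hx
  have hs0 : 0 ≤ s := div_nonneg (abs_nonneg _) hlen.le
  rcases hs0.eq_or_lt with h | h
  · rw [← h, mul_zero, hψ0 x hxI]
    exact zero_le'
  · have hεs : 0 < ε * s := mul_pos hε h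
    have h1 := hL.2 x hxI (ε * s) s hεs (by nlinarith)
    have hne0 : ENNReal.ofReal (ε * s) ≠ 0 := by
      simp [ENNReal.ofReal_eq_zero, not_le, hεs]
    have hsne0 : ENNReal.ofReal s ≠ 0 := by
      simp [ENNReal.ofReal_eq_zero, not_le, h]
    calc ψ x (ε * s)
        = ψ x (ε * s) / ENNReal.ofReal (ε * s) * ENNReal.ofReal (ε * s) :=
          (ENNReal.div_mul_cancel hne0 ENNReal.ofReal_ne_top).symm
      _ ≤ ENNReal.ofReal L * (ψ x s / ENNReal.ofReal s) * ENNReal.ofReal (ε * s) :=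
          mul_le_mul_left h1 _
      _ = ENNReal.ofReal (L * ε) * (ψ x s / ENNReal.ofReal s * ENNReal.ofReal s) := by
          rw [ENNReal.ofReal_mul (by linarith : (0:ℝ) ≤ L),
            ENNReal.ofReal_mul hε.le]
          ring
      _ = ENNReal.ofReal (L * ε) * ψ x s := by
          rw [ENNReal.div_mul_cancel hsne0 ENNReal.ofReal_ne_top]
      _ ≤ ENNReal.ofReal (L * ε) * phiSup ψ (Set.Icc (P.x k) (P.x (k + 1))) s :=
          mul_le_mul_right hsup _

end RbvEmbeddingAux


/-- Lemma 4.2.  If `ψ(x, t/K) ≤ φ(x,t) + 1`, then `RBV^φ(I) ↪ RBV^ψ(I)` with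
`‖f‖_{RBV^ψ} ≤ L K (1 + |I|) ‖f‖_{RBV^φ}`. -/


theorem rbv_embedding (a b : ℝ) (hab : a < b)
    (φ ψ : ℝ → ℝ → ℝ≥0∞) (hφ : IsPhiW φ (Set.Icc a b)) (hψ : IsPhiW ψ (Set.Icc a b))
    (L : ℝ) (hL : AInc1Const ψ (Set.Icc a b) L)
    (K : ℝ) (hK : 0 < K)
    (hcomp : ∀ x ∈ Set.Icc a b, ∀ t : ℝ, 0 ≤ t → ψ x (t / K) ≤ φ x t + 1) :
    ∀ f : ℝ → ℝ, MemRBV φ a b f →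
      MemRBV ψ a b f ∧ rbvNorm ψ a b f ≤ L * K * (1 + (b - a)) * rbvNorm φ a b f := by
  intro f hf
  have hd : 0 < b - a := sub_pos.mpr hab
  have hL1 : (1 : ℝ) ≤ L := hL.1
  have hLpos : (0 : ℝ) < L := lt_of_lt_of_le one_pos hL1
  have hψ0 : ∀ x ∈ Set.Icc a b, ψ x 0 = 0 := hψ.map_zero
  rw [MemRBV] at hf
  obtain ⟨l0, hl01, hl0mem⟩ :=
    ((hf.eventually_lt_const (by norm_num : (0 : ℝ≥0∞) < 1)).and
      eventually_mem_nhdsWithin).exists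
  have hl0pos : 0 < l0 := hl0mem
  have hV0 : rieszVar φ a b (fun x => l0 * f x) ≤ 1 := hl01.le
  have hM : rieszVar ψ a b (fun x => (l0 * f x) / K) ≤ 1 + ENNReal.ofReal (b - a) :=
    (rbv_key1 hK hcomp _).trans (add_le_add_left hV0 _)
  have hCt : (1 : ℝ≥0∞) + ENNReal.ofReal (b - a) ≠ ⊤ := by
    simp [ENNReal.add_ne_top]
  have hmem : MemRBV ψ a b f := by
    rw [MemRBV]
    have hup : Tendsto (fun lam : ℝ => ENNReal.ofReal (L * K / l0 * lam)
        * (1 + ENNReal.ofReal (b - a))) (nhdsWithin 0 (Ioi 0)) (nhds 0) := by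
      have h1 : Tendsto (fun lam : ℝ => ENNReal.ofReal (L * K / l0 * lam))
          (nhdsWithin 0 (Ioi 0)) (nhds 0) := by
        have hcont : Continuous fun lam : ℝ => ENNReal.ofReal (L * K / l0 * lam) :=
          ENNReal.continuous_ofReal.comp (continuous_const.mul continuous_id)
        have h2 := hcont.tendsto 0
        simp only [mul_zero, ENNReal.ofReal_zero] at h2
        exact h2.mono_left nhdsWithin_le_nhds
      have h3 := ENNReal.Tendsto.mul_const h1 (Or.inr hCt)
      rwa [zero_mul] at h3
    refine tendsto_of_tendsto_of_tendsto_of_le_of_le' tendsto_const_nhds hup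
      (Filter.Eventually.of_forall fun _ => zero_le') ?_
    filter_upwards [Ioo_mem_nhdsGT_of_mem
      (Set.left_mem_Ico.mpr (by positivity : (0:ℝ) < l0 / K))] with lam hlam
    obtain ⟨hlam0, hlamlt⟩ := hlam
    have hfe : (fun x => lam * f x) = fun x => (lam * K / l0) * ((l0 * f x) / K) := by
      funext x
      rw [div_mul_div_comm, eq_div_iff (mul_pos hl0pos hK).ne']
      ring
    rw [hfe]
    have hε : 0 < lam * K / l0 := by positivity
    have hε1 : lam * K / l0 ≤ 1 := by
      rw [div_le_one hl0pos]
      have : lam * K < l0 / K * K := by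
        exact mul_lt_mul_of_pos_right hlamlt hK
      rw [div_mul_cancel₀ _ hK.ne'] at this
      exact this.le
    refine (rbv_key2 hψ0 hL hε hε1 _).trans ?_
    rw [show L * (lam * K / l0) = L * K / l0 * lam by ring]
    exact mul_le_mul_right hM _
  refine ⟨hmem, ?_⟩
  set c : ℝ := L * K * (1 + (b - a)) with hc
  have hcpos : 0 < c := by
    rw [hc]
    have : (0:ℝ) < 1 + (b - a) := by linarith
    positivity
  have hεpos : 0 < 1 / (L * (1 + (b - a))) := by
    have : (0:ℝ) < 1 + (b - a) := by linarith
    positivity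
  have hε1 : 1 / (L * (1 + (b - a))) ≤ 1 := by
    rw [div_le_one (by nlinarith)]
    nlinarith
  have hmapped : ∀ lam : ℝ, 0 < lam → rieszVar φ a b (fun x => f x / lam) ≤ 1 →
      0 < c * lam ∧ rieszVar ψ a b (fun x => f x / (c * lam)) ≤ 1 := by
    intro lam hlam0 hlam1
    refine ⟨mul_pos hcpos hlam0, ?_⟩
    have hfe : (fun x => f x / (c * lam))
        = fun x => (1 / (L * (1 + (b - a)))) * (f x / lam / K) := by
      funext x
      rw [one_div_mul_eq_div, div_div, div_div, hc]
      congr 1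
      ring
    rw [hfe]
    refine (rbv_key2 hψ0 hL hεpos hε1 _).trans ?_
    have h1 : L * (1 / (L * (1 + (b - a)))) = 1 / (1 + (b - a)) := by
      have h2 : (1:ℝ) + (b - a) ≠ 0 := by linarith
      field_simp
    rw [h1]
    calc ENNReal.ofReal (1 / (1 + (b - a))) * rieszVar ψ a b (fun x => f x / lam / K)
        ≤ ENNReal.ofReal (1 / (1 + (b - a))) * (1 + ENNReal.ofReal (b - a)) :=
          mul_le_mul_right ((rbv_key1 hK hcomp _).trans (add_le_add_left hlam1 _)) _
      _ = 1 := by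
          rw [show (1 : ℝ≥0∞) + ENNReal.ofReal (b - a) = ENNReal.ofReal (1 + (b - a)) by
              rw [ENNReal.ofReal_add (by norm_num) hd.le, ENNReal.ofReal_one],
            ← ENNReal.ofReal_mul (by positivity),
            show 1 / (1 + (b - a)) * (1 + (b - a)) = 1 by
              field_simp]
          exact ENNReal.ofReal_one
  have hSne : {lam : ℝ | 0 < lam ∧ rieszVar φ a b (fun x => f x / lam) ≤ 1}.Nonempty := by
    refine ⟨1 / l0, by positivity, ?_⟩
    have : (fun x => f x / (1 / l0)) = fun x => l0 * f x := by
      funext x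
      rw [div_div_eq_mul_div, div_one, mul_comm]
    rw [this]
    exact hV0
  have h1 : ∀ lam : ℝ, 0 < lam → rieszVar φ a b (fun x => f x / lam) ≤ 1 →
      rbvNorm ψ a b f ≤ c * lam := by
    intro lam hlam0 hlam1
    rw [rbvNorm]
    exact csInf_le ⟨0, fun y hy => hy.1.le⟩ (hmapped lam hlam0 hlam1)
  have h2 : rbvNorm ψ a b f / c
      ≤ sInf {lam : ℝ | 0 < lam ∧ rieszVar φ a b (fun x => f x / lam) ≤ 1} := by
    refine le_csInf hSne fun lam hlam => ?_
    rw [div_le_iff₀ hcpos, mul_comm]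
    exact h1 lam hlam.1 hlam.2
  have h3 : rbvNorm φ a b f
      = sInf {lam : ℝ | 0 < lam ∧ rieszVar φ a b (fun x => f x / lam) ≤ 1} := rfl
  rw [h3, mul_comm, ← div_le_iff₀ hcpos]
  exact h2
end

section
/- Let I=[a,b]⊂ℝ be a closed nondegenerate interval and let φ∈Φ_w(I) satisfy (A0), (aInc)_p for some p>1 and (aDec)_q for some q<∞. Then Lip(I) ⊆ RBV^φ(I) ⊆ AC(I), i.e. every Lipschitz function on I has bounded Riesz φ-variation, and every function of bounded Riesz φ-variation is absolutely continuous on I. -/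
open MeasureTheory Filter Set
open scoped ENNReal

noncomputable section

namespace IntervalPartition

variable {a b : ℝ} (P : IntervalPartition a b)

lemma x_le_x {i j : ℕ} (hij : i ≤ j) (hj : j ≤ P.n) : P.x i ≤ P.x j := by
  induction j with
  | zero => obtain rfl := Nat.le_zero.mp hij; exact le_rfl
  | succ k ih =>
    rcases Nat.eq_or_lt_of_le hij with rfl | h
    · exact le_rfl
    · exact le_trans (ih (Nat.lt_succ_iff.mp h) (le_trans k.le_succ hj))
        (P.strict k (by omega)).le

lemma a_le_x {k : ℕ} (hk : k ≤ P.n) : a ≤ P.x k := by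
  have := P.x_le_x (Nat.zero_le k) hk; rwa [P.left] at this

lemma x_le_b {k : ℕ} (hk : k ≤ P.n) : P.x k ≤ b := by
  have := P.x_le_x hk le_rfl; rwa [P.right] at this

lemma sum_len : ∑ k ∈ Finset.range P.n, (P.x (k + 1) - P.x k) = b - a := by
  rw [Finset.sum_range_sub, P.left, P.right]

end IntervalPartition

/-- Part 1: Lipschitz functions are in `RBV^φ`. -/
lemma lip_mem_rbv (a b : ℝ) (hab : a < b)
    (φ : ℝ → ℝ → ℝ≥0∞) (hφ : IsPhiW φ (Set.Icc a b)) (hA0 : A0 φ (Set.Icc a b))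
    (p : ℝ) (hp : 1 < p) (hinc : AIncP φ (Set.Icc a b) p)
    (f : ℝ → ℝ) (C : NNReal) (hf : LipschitzOnWith C f (Set.Icc a b)) :
    MemRBV φ a b f := by
  obtain ⟨β, hβ0, hβ1, hβ⟩ := hA0
  obtain ⟨Lp, hLp1, hLp⟩ := hinc
  set C' : ℝ := (C : ℝ) + 1 with hC'def
  have hC' : 0 < C' := by positivity
  -- the key bound for small lam
  have key : ∀ lam : ℝ, 0 < lam → lam * C' ≤ β →
      rieszVar φ a b (fun x => lam * f x) ≤ ENNReal.ofReal (Lp * (lam * C') / β ^ p * (b - a)) := by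
    intro lam hlam hlamC
    set s0 : ℝ := lam * C' with hs0def
    have hs0 : 0 < s0 := by positivity
    have hs01 : s0 ≤ 1 := le_trans hlamC hβ1
    -- pointwise bound for φ x s0
    have hpt : ∀ x ∈ Set.Icc a b, ∀ u : ℝ, 0 ≤ u → u ≤ s0 →
        φ x u ≤ ENNReal.ofReal (Lp * s0 / β ^ p) := by
      intro x hx u hu hus0
      have h1 : φ x u ≤ φ x s0 :=
        hφ.mono x hx hu (le_of_lt hs0) hus0
      have h2 := hLp x hx s0 β hs0 hlamC
      have hβp : (0:ℝ) < β ^ p := Real.rpow_pos_of_pos hβ0 p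
      have hs0p : (0:ℝ) < s0 ^ p := Real.rpow_pos_of_pos hs0 p
      have hne : ENNReal.ofReal (s0 ^ p) ≠ 0 := by
        simp [ENNReal.ofReal_eq_zero, not_le, hs0p]
      have hnetop : ENNReal.ofReal (s0 ^ p) ≠ ⊤ := ENNReal.ofReal_ne_top
      have h3 : φ x s0 = ENNReal.ofReal (s0 ^ p) * (φ x s0 / ENNReal.ofReal (s0 ^ p)) :=
        (ENNReal.mul_div_cancel hne hnetop).symm
      have h4 : φ x β / ENNReal.ofReal (β ^ p) ≤ 1 / ENNReal.ofReal (β ^ p) :=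
        ENNReal.div_le_div_right (hβ x hx).1 _
      calc φ x u ≤ φ x s0 := h1
        _ = ENNReal.ofReal (s0 ^ p) * (φ x s0 / ENNReal.ofReal (s0 ^ p)) := h3
        _ ≤ ENNReal.ofReal (s0 ^ p) * (ENNReal.ofReal Lp * (φ x β / ENNReal.ofReal (β ^ p))) :=
            mul_le_mul_right h2 _
        _ ≤ ENNReal.ofReal (s0 ^ p) * (ENNReal.ofReal Lp * (1 / ENNReal.ofReal (β ^ p))) :=
            mul_le_mul_right (mul_le_mul_right h4 _) _
        _ = ENNReal.ofReal (s0 ^ p) * (ENNReal.ofReal (Lp / β ^ p)) := by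
            rw [mul_one_div, ENNReal.ofReal_div_of_pos hβp]
        _ = ENNReal.ofReal (s0 ^ p * (Lp / β ^ p)) := by
            rw [ENNReal.ofReal_mul (le_of_lt hs0p)]
        _ ≤ ENNReal.ofReal (s0 * (Lp / β ^ p)) := by
            apply ENNReal.ofReal_le_ofReal
            apply mul_le_mul_of_nonneg_right _ (by positivity)
            calc s0 ^ p ≤ s0 ^ (1:ℝ) :=
                  Real.rpow_le_rpow_of_exponent_ge hs0 hs01 hp.le
              _ = s0 := Real.rpow_one s0
        _ = ENNReal.ofReal (Lp * s0 / β ^ p) := by ring_nf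
    -- bound the variation
    apply iSup_le
    intro P
    have hsum : vSum φ (fun x => lam * f x) P ≤
        ∑ k ∈ Finset.range P.n,
          ENNReal.ofReal (Lp * s0 / β ^ p) * ENNReal.ofReal (P.x (k + 1) - P.x k) := by
      apply Finset.sum_le_sum
      intro k hk
      rw [Finset.mem_range] at hk
      apply mul_le_mul_left
      apply iSup₂_le
      intro x hx
      have hxk : P.x k < P.x (k + 1) := P.strict k hk
      have hxab : x ∈ Set.Icc a b := by
        refine ⟨le_trans (P.a_le_x (le_of_lt hk)) hx.1, le_trans hx.2 (P.x_le_b hk)⟩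
      set len : ℝ := P.x (k + 1) - P.x k with hlen
      have hlenpos : 0 < len := by simp [hlen, hxk]
      have habs : |lam * f (P.x (k + 1)) - lam * f (P.x k)| ≤ s0 * len := by
        rw [← mul_sub, abs_mul, abs_of_pos hlam]
        have h5 : |f (P.x (k + 1)) - f (P.x k)| ≤ C * len := by
          have := hf.dist_le_mul (P.x (k+1))
            ⟨P.a_le_x hk, P.x_le_b hk⟩ (P.x k)
            ⟨P.a_le_x (le_of_lt hk), le_trans (P.strict k hk).le (P.x_le_b hk)⟩
          rw [Real.dist_eq, Real.dist_eq] at this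
          rwa [abs_of_pos hlenpos] at this
        calc lam * |f (P.x (k + 1)) - f (P.x k)| ≤ lam * (C * len) :=
              mul_le_mul_of_nonneg_left h5 hlam.le
          _ ≤ s0 * len := by
              rw [hs0def, hC'def]
              nlinarith [hlenpos.le, hlam.le]
      apply hpt x hxab
      · positivity
      · rw [div_le_iff₀ hlenpos]
        exact habs
    refine le_trans hsum ?_
    rw [← Finset.mul_sum, ← ENNReal.ofReal_sum_of_nonneg (fun k hk => by
      rw [Finset.mem_range] at hk; exact (sub_pos.mpr (P.strict k hk)).le),
      P.sum_len, ← ENNReal.ofReal_mul (by positivity)]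
  -- conclude with the squeeze theorem
  have hβp : (0:ℝ) < β ^ p := Real.rpow_pos_of_pos hβ0 p
  apply tendsto_of_tendsto_of_tendsto_of_le_of_le'
    (g := fun _ : ℝ => (0 : ℝ≥0∞))
    (h := fun lam : ℝ => ENNReal.ofReal (Lp * (lam * C') / β ^ p * (b - a)))
    tendsto_const_nhds
  · have : Filter.Tendsto (fun lam : ℝ => Lp * (lam * C') / β ^ p * (b - a))
        (nhdsWithin 0 (Set.Ioi 0)) (nhds 0) := by
      have hc : Continuous (fun lam : ℝ => Lp * (lam * C') / β ^ p * (b - a)) := by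
        continuity
      have := (hc.tendsto 0).mono_left (nhdsWithin_le_nhds (s := Set.Ioi 0))
      simpa using this
    simpa using ENNReal.tendsto_ofReal this
  · exact Filter.Eventually.of_forall fun _ => zero_le
  · have hmem : Set.Ioo (0:ℝ) (β / C') ∈ nhdsWithin (0:ℝ) (Set.Ioi 0) :=
      Ioo_mem_nhdsGT_of_mem ⟨le_rfl, by positivity⟩
    filter_upwards [hmem] with lam hlam
    exact key lam hlam.1 (by rw [← le_div_iff₀ hC']; exact hlam.2.le)

/-- Construction of a partition of `[a,b]` through a finite set of points, such that any
"isolated" pair `s < t` in the set becomes a cell of the partition. -/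
lemma exists_partition_through (a b : ℝ) (hab : a < b) (S : Finset ℝ)
    (haS : a ∈ S) (hbS : b ∈ S) (hS : ∀ e ∈ S, a ≤ e ∧ e ≤ b) :
    ∃ P : IntervalPartition a b, ∀ s t : ℝ, s ∈ S → t ∈ S → s < t →
      (∀ e ∈ S, e ≤ s ∨ t ≤ e) → ∃ j < P.n, P.x j = s ∧ P.x (j + 1) = t := by
  classical
  set l : List ℝ := S.sort (· ≤ ·) with hl
  have hsorted : l.Pairwise (· < ·) := List.sortedLT_iff_pairwise.mp S.sortedLT_sort
  have hmeml : ∀ e : ℝ, e ∈ l ↔ e ∈ S := fun e => Finset.mem_sort (· ≤ ·)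
  have hcard : 2 ≤ l.length := by
    rw [hl, Finset.length_sort]
    exact Finset.one_lt_card.mpr ⟨a, haS, b, hbS, hab.ne⟩
  set n : ℕ := l.length - 1 with hn
  have hnpos : 0 < n := by omega
  set x : ℕ → ℝ := fun j => l.getD j b with hx
  have hstrict : ∀ i j : ℕ, i < j → j < l.length → x i < x j := by
    intro i j hij hj
    rw [hx]
    simp only [List.getD_eq_getElem l b (lt_trans hij hj), List.getD_eq_getElem l b hj]
    exact hsorted.rel_get_of_lt (a := ⟨i, lt_trans hij hj⟩) (b := ⟨j, hj⟩) hij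
  have hmono : ∀ i j : ℕ, i ≤ j → j < l.length → x i ≤ x j := by
    intro i j hij hj
    rcases Nat.eq_or_lt_of_le hij with rfl | h
    · exact le_rfl
    · exact (hstrict i j h hj).le
  have hmemx : ∀ j, j < l.length → x j ∈ S := by
    intro j hj
    rw [hx]
    simp only [List.getD_eq_getElem l b hj]
    exact (hmeml _).mp (List.getElem_mem hj)
  have hx0 : x 0 = a := by
    obtain ⟨k, hk, hka⟩ := List.mem_iff_getElem.mp ((hmeml a).mpr haS)
    have h0 : x 0 ≤ x k := hmono 0 k (Nat.zero_le k) hk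
    rw [hx] at h0 ⊢
    simp only [List.getD_eq_getElem l b hk] at h0
    rw [hka] at h0
    exact le_antisymm h0 (hS _ (hmemx 0 (by omega))).1
  have hxn : x n = b := by
    obtain ⟨k, hk, hkb⟩ := List.mem_iff_getElem.mp ((hmeml b).mpr hbS)
    have h0 : x k ≤ x n := hmono k n (by omega) (by omega)
    rw [hx] at h0 ⊢
    simp only [List.getD_eq_getElem l b hk] at h0
    rw [hkb] at h0
    exact le_antisymm (hS _ (hmemx n (by omega))).2 h0
  refine ⟨⟨n, hnpos, x, hx0, hxn, fun i hi => hstrict i (i + 1) (Nat.lt_succ_self i) (by omega)⟩,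
    ?_⟩
  intro s t hsS htS hst hiso
  obtain ⟨j, hj, hjs⟩ := List.mem_iff_getElem.mp ((hmeml s).mpr hsS)
  have hjx : x j = s := by rw [hx]; simp only [List.getD_eq_getElem l b hj]; exact hjs
  have hjn : j < n := by
    rcases Nat.lt_or_ge j n with h | h
    · exact h
    · exfalso
      have : j = n := by omega
      rw [this, hxn] at hjx
      have hb := (hS t htS).2
      linarith
  refine ⟨j, hjn, hjx, ?_⟩
  have hj1 : j + 1 < l.length := by omega
  have hgt : s < x (j + 1) := by
    rw [← hjx]; exact hstrict j (j + 1) (Nat.lt_succ_self j) hj1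
  have hge : x (j + 1) ≤ t := by
    -- t is in the list at some index k; j < k hence j+1 ≤ k
    obtain ⟨k, hk, hkt⟩ := List.mem_iff_getElem.mp ((hmeml t).mpr htS)
    have hkx : x k = t := by rw [hx]; simp only [List.getD_eq_getElem l b hk]; exact hkt
    have hjk : j < k := by
      by_contra h
      push_neg at h
      have := hmono k j h hj
      rw [hkx, hjx] at this
      exact absurd this (not_le.mpr hst)
    have := hmono (j + 1) k hjk hk
    rw [hkx] at this
    exact this
  rcases hiso _ (hmemx (j + 1) hj1) with h | h
  · exact absurd h (not_le.mpr hgt)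
  · exact le_antisymm hge h

/-- Part 2: functions in `RBV^φ` are absolutely continuous. -/
lemma rbv_absCont (a b : ℝ) (hab : a < b)
    (φ : ℝ → ℝ → ℝ≥0∞) (hφ : IsPhiW φ (Set.Icc a b)) (hA0 : A0 φ (Set.Icc a b))
    (p : ℝ) (hp : 1 < p) (hinc : AIncP φ (Set.Icc a b) p)
    (f : ℝ → ℝ) (hf : MemRBV φ a b f) : AbsContOn f a b := by
  classical
  obtain ⟨β, hβ0, hβ1, hβ⟩ := hA0
  obtain ⟨Lp, hLp1, hLp⟩ := hinc
  have hLp0 : (0:ℝ) < Lp := lt_of_lt_of_le one_pos hLp1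
  obtain ⟨lam, hV, hlam⟩ :=
    ((hf.eventually_lt_const (by norm_num : (0:ℝ≥0∞) < 1)).and self_mem_nhdsWithin).exists
  have hlam0 : (0:ℝ) < lam := hlam
  intro ε hε
  have hβp : (0:ℝ) < β ^ p := Real.rpow_pos_of_pos hβ0 p
  set A : ℝ := 2 * Lp / (β ^ p * lam * ε) with hA
  have hApos : 0 < A := by positivity
  set M : ℝ := max (1 / β) (A ^ (1 / (p - 1))) with hM
  have hp1 : (0:ℝ) < p - 1 := by linarith
  have hMβ : 1 / β ≤ M := le_max_left _ _
  have hM0 : 0 < M := lt_of_lt_of_le (by positivity) hMβ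
  have hMA : A ≤ M ^ (p - 1) := by
    calc A = (A ^ (1 / (p - 1))) ^ (p - 1) := by
          rw [← Real.rpow_mul hApos.le, one_div, inv_mul_cancel₀ (by linarith), Real.rpow_one]
      _ ≤ M ^ (p - 1) := Real.rpow_le_rpow (by positivity) (le_max_right _ _) hp1.le
  refine ⟨lam * ε / (2 * M), by positivity, ?_⟩
  intro m s t hst hdisj hlt
  have hdisj' : ∀ i j, i < m → j < m → i ≠ j → t i ≤ s j ∨ t j ≤ s i := by
    intro i j hi hj hij
    rcases Nat.lt_or_ge i j with h | h
    · exact hdisj i j h hj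
    · exact (hdisj j i (by omega) hi).symm
  -- the finset of all endpoints
  set S : Finset ℝ :=
    insert a (insert b ((Finset.range m).image s ∪ (Finset.range m).image t)) with hS
  have hmemS : ∀ e ∈ S, a ≤ e ∧ e ≤ b := by
    intro e he
    simp only [hS, Finset.mem_insert, Finset.mem_union, Finset.mem_image,
      Finset.mem_range] at he
    rcases he with rfl | rfl | ⟨i, hi, rfl⟩ | ⟨i, hi, rfl⟩
    · exact ⟨le_rfl, hab.le⟩
    · exact ⟨hab.le, le_rfl⟩
    · exact ⟨(hst i hi).1, le_trans (hst i hi).2.1 (hst i hi).2.2⟩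
    · exact ⟨le_trans (hst i hi).1 (hst i hi).2.1, (hst i hi).2.2⟩
  obtain ⟨P, hP⟩ := exists_partition_through a b hab S (by simp [hS]) (by simp [hS]) hmemS
  set u : ℕ → ℝ := fun i => lam * |f (t i) - f (s i)| / (t i - s i) with hu
  set term : ℕ → ℝ≥0∞ := fun i =>
    phiSup φ (Set.Icc (s i) (t i)) (u i) * ENNReal.ofReal (t i - s i) with hterm
  set Nd : Finset ℕ := (Finset.range m).filter (fun i => s i < t i) with hNd
  have hsmem : ∀ i, i < m → s i ∈ S := by
    intro i hi
    simp only [hS, Finset.mem_insert, Finset.mem_union, Finset.mem_image, Finset.mem_range]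
    exact Or.inr (Or.inr (Or.inl ⟨i, hi, rfl⟩))
  have htmem : ∀ i, i < m → t i ∈ S := by
    intro i hi
    simp only [hS, Finset.mem_insert, Finset.mem_union, Finset.mem_image, Finset.mem_range]
    exact Or.inr (Or.inr (Or.inr ⟨i, hi, rfl⟩))
  have hiso : ∀ i, i < m → s i < t i → ∀ e ∈ S, e ≤ s i ∨ t i ≤ e := by
    intro i hi hsti e he
    simp only [hS, Finset.mem_insert, Finset.mem_union, Finset.mem_image,
      Finset.mem_range] at he
    rcases he with rfl | rfl | ⟨i', hi', rfl⟩ | ⟨i', hi', rfl⟩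
    · exact Or.inl (hst i hi).1
    · exact Or.inr (hst i hi).2.2
    · rcases eq_or_ne i' i with rfl | hne
      · exact Or.inl le_rfl
      · rcases hdisj' i i' hi hi' (Ne.symm hne) with h | h
        · exact Or.inr h
        · exact Or.inl (le_trans (hst i' hi').2.1 h)
    · rcases eq_or_ne i' i with rfl | hne
      · exact Or.inr le_rfl
      · rcases hdisj' i i' hi hi' (Ne.symm hne) with h | h
        · exact Or.inr (le_trans h (hst i' hi').2.1)
        · exact Or.inl h
  have hJex : ∀ i ∈ Nd, ∃ j, j < P.n ∧ P.x j = s i ∧ P.x (j + 1) = t i := by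
    intro i hi
    rw [hNd, Finset.mem_filter, Finset.mem_range] at hi
    obtain ⟨j, hj, h⟩ := hP (s i) (t i) (hsmem i hi.1) (htmem i hi.1) hi.2 (hiso i hi.1 hi.2)
    exact ⟨j, hj, h⟩
  set J : ℕ → ℕ := fun i => if h : ∃ j, j < P.n ∧ P.x j = s i ∧ P.x (j + 1) = t i
    then h.choose else 0 with hJdef
  have hJ : ∀ i ∈ Nd, J i < P.n ∧ P.x (J i) = s i ∧ P.x (J i + 1) = t i := by
    intro i hi
    have h := hJex i hi
    simp only [hJdef, dif_pos h]
    exact h.choose_spec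
  -- Claim 1: the sum over Nd is at most the Riesz variation
  have claim1 : ∑ i ∈ Nd, term i ≤ rieszVar φ a b (fun x => lam * f x) := by
    have hinj : ∀ i ∈ Nd, ∀ i' ∈ Nd, J i = J i' → i = i' := by
      intro i hi i' hi' hJeq
      by_contra hne
      have h1 := (hJ i hi).2.1
      have h2 := (hJ i' hi').2.1
      rw [hJeq, h2] at h1
      rw [hNd, Finset.mem_filter, Finset.mem_range] at hi hi'
      rcases hdisj' i i' hi.1 hi'.1 hne with h | h
      · linarith [hi.2, hi'.2]
      · linarith [hi.2, hi'.2]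
    have hle : ∑ i ∈ Nd, term i ≤ vSum φ (fun x => lam * f x) P := by
      simp only [vSum]
      have heq : ∑ i ∈ Nd, term i = ∑ j ∈ Nd.image J,
          phiSup φ (Set.Icc (P.x j) (P.x (j + 1)))
            (|lam * f (P.x (j + 1)) - lam * f (P.x j)| / (P.x (j + 1) - P.x j)) *
          ENNReal.ofReal (P.x (j + 1) - P.x j) := by
        rw [Finset.sum_image hinj]
        apply Finset.sum_congr rfl
        intro i hi
        have h := hJ i hi
        simp only [hterm, h.2.1, h.2.2]
        have harg : u i = |lam * f (t i) - lam * f (s i)| / (t i - s i) := by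
          simp only [hu]
          rw [← mul_sub, abs_mul, abs_of_pos hlam0]
        rw [harg]
      rw [heq]
      exact Finset.sum_le_sum_of_subset (fun j hj => by
        obtain ⟨i, hi, rfl⟩ := Finset.mem_image.mp hj
        exact Finset.mem_range.mpr (hJ i hi).1)
    exact le_trans hle (le_iSup _ P)
  -- Claim 2: lower bound for the terms with large ratio
  set c : ℝ := β ^ p * M ^ (p - 1) / Lp with hc
  have hMp : (0:ℝ) < M ^ (p - 1) := Real.rpow_pos_of_pos hM0 _
  have hc0 : 0 < c := by positivity
  set Lg : Finset ℕ := Nd.filter (fun i => M < u i) with hLg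
  have claim2 : ∀ i ∈ Lg, ENNReal.ofReal (c * (lam * |f (t i) - f (s i)|)) ≤ term i := by
    intro i hi
    rw [hLg, Finset.mem_filter] at hi
    obtain ⟨hiNd, hMu⟩ := hi
    rw [hNd, Finset.mem_filter, Finset.mem_range] at hiNd
    obtain ⟨hi, hsti⟩ := hiNd
    have hℓ : 0 < t i - s i := sub_pos.mpr hsti
    have h1β : (0:ℝ) < 1 / β := by positivity
    have hu0 : 0 < u i := lt_trans (lt_of_lt_of_le h1β hMβ) hMu
    have h1βu : 1 / β ≤ u i := le_trans hMβ hMu.le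
    have hsIcc : s i ∈ Set.Icc a b := ⟨(hst i hi).1, le_trans (hst i hi).2.1 (hst i hi).2.2⟩
    have h2 := hLp (s i) hsIcc (1 / β) (u i) h1β h1βu
    have h3 : (1:ℝ≥0∞) / ENNReal.ofReal ((1 / β) ^ p) ≤
        φ (s i) (1 / β) / ENNReal.ofReal ((1 / β) ^ p) :=
      ENNReal.div_le_div_right (hβ (s i) hsIcc).2 _
    have hβpinv : ((1:ℝ) / β) ^ p = 1 / β ^ p := by
      rw [Real.div_rpow zero_le_one hβ0.le, Real.one_rpow]
    have h4 : ENNReal.ofReal (β ^ p) ≤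
        ENNReal.ofReal Lp * (φ (s i) (u i) / ENNReal.ofReal (u i ^ p)) := by
      refine le_trans ?_ (le_trans h3 h2)
      rw [hβpinv, ENNReal.ofReal_div_of_pos hβp, ENNReal.ofReal_one, one_div, one_div,
        inv_inv]
    have hup : (0:ℝ) < u i ^ p := Real.rpow_pos_of_pos hu0 p
    have hLptop : ENNReal.ofReal Lp ≠ ⊤ := ENNReal.ofReal_ne_top
    have hLpne : ENNReal.ofReal Lp ≠ 0 := by
      simp only [ne_eq, ENNReal.ofReal_eq_zero, not_le]; exact hLp0
    have h5 : ENNReal.ofReal (β ^ p) / ENNReal.ofReal Lp ≤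
        φ (s i) (u i) / ENNReal.ofReal (u i ^ p) :=
      (ENNReal.div_le_iff hLpne hLptop).mpr (by rwa [mul_comm] at h4)
    have h6 : ENNReal.ofReal (β ^ p / Lp * u i ^ p) ≤ φ (s i) (u i) := by
      have h7 := mul_le_mul_left h5 (ENNReal.ofReal (u i ^ p))
      rw [ENNReal.div_mul_cancel (by simp [ENNReal.ofReal_eq_zero, not_le, hup])
        ENNReal.ofReal_ne_top] at h7
      refine le_trans (le_of_eq ?_) h7
      rw [ENNReal.ofReal_mul (by positivity), ENNReal.ofReal_div_of_pos hLp0]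
    have hφsup : φ (s i) (u i) ≤ phiSup φ (Set.Icc (s i) (t i)) (u i) := by
      simp only [phiSup]
      exact le_biSup (fun x => φ x (u i)) (Set.left_mem_Icc.mpr hsti.le)
    have h8 : M ^ (p - 1) ≤ u i ^ (p - 1) := Real.rpow_le_rpow hM0.le hMu.le hp1.le
    have h9 : u i ^ p = u i ^ (p - 1) * u i := by
      rw [← Real.rpow_add_one hu0.ne' (p - 1)]
      ring_nf
    have h10 : c * u i ≤ β ^ p / Lp * u i ^ p := by
      calc c * u i = β ^ p / Lp * M ^ (p - 1) * u i := by rw [hc]; ring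
        _ ≤ β ^ p / Lp * u i ^ (p - 1) * u i :=
            mul_le_mul_of_nonneg_right (mul_le_mul_of_nonneg_left h8 (by positivity)) hu0.le
        _ = β ^ p / Lp * u i ^ p := by rw [h9]; ring
    have h11 : u i * (t i - s i) = lam * |f (t i) - f (s i)| := by
      simp only [hu]
      field_simp
    calc ENNReal.ofReal (c * (lam * |f (t i) - f (s i)|))
        = ENNReal.ofReal (c * u i) * ENNReal.ofReal (t i - s i) := by
          rw [← ENNReal.ofReal_mul (by positivity), mul_assoc, h11]
      _ ≤ ENNReal.ofReal (β ^ p / Lp * u i ^ p) * ENNReal.ofReal (t i - s i) :=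
          mul_le_mul_left (ENNReal.ofReal_le_ofReal h10) _
      _ ≤ φ (s i) (u i) * ENNReal.ofReal (t i - s i) := mul_le_mul_left h6 _
      _ ≤ phiSup φ (Set.Icc (s i) (t i)) (u i) * ENNReal.ofReal (t i - s i) :=
          mul_le_mul_left hφsup _
      _ = term i := by rw [hterm]
  -- Claim 3
  have hLgNd : Lg ⊆ Nd := Finset.filter_subset _ _
  have claim3 : ∑ i ∈ Lg, lam * |f (t i) - f (s i)| ≤ Lp / (β ^ p * M ^ (p - 1)) := by
    have h1 : ENNReal.ofReal (c * ∑ i ∈ Lg, lam * |f (t i) - f (s i)|) ≤ 1 := by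
      rw [Finset.mul_sum, ENNReal.ofReal_sum_of_nonneg (fun i _ => by positivity)]
      calc ∑ i ∈ Lg, ENNReal.ofReal (c * (lam * |f (t i) - f (s i)|))
          ≤ ∑ i ∈ Lg, term i := Finset.sum_le_sum claim2
        _ ≤ ∑ i ∈ Nd, term i := Finset.sum_le_sum_of_subset hLgNd
        _ ≤ rieszVar φ a b (fun x => lam * f x) := claim1
        _ ≤ 1 := hV.le
    rw [ENNReal.ofReal_le_one] at h1
    rw [hc, div_mul_eq_mul_div, div_le_one hLp0] at h1
    rw [le_div_iff₀ (by positivity)]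
    linear_combination h1
  -- assemble the final bound
  have hLgsub : Lg ⊆ Finset.range m := subset_trans hLgNd (Finset.filter_subset _ _)
  have hB1 : ∑ i ∈ Lg, |f (t i) - f (s i)| ≤ ε / 2 := by
    rw [← Finset.mul_sum] at claim3
    have h2 : Lp / (β ^ p * M ^ (p - 1)) ≤ lam * ε / 2 := by
      rw [div_le_iff₀ (by positivity)]
      calc Lp = β ^ p * lam * ε / 2 * A := by rw [hA]; field_simp
        _ ≤ β ^ p * lam * ε / 2 * M ^ (p - 1) := by
            apply mul_le_mul_of_nonneg_left hMA (by positivity)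
        _ = lam * ε / 2 * (β ^ p * M ^ (p - 1)) := by ring
    have h3 := le_trans claim3 h2
    have h4 : lam * (ε / 2) = lam * ε / 2 := by ring
    rw [← h4] at h3
    exact le_of_mul_le_mul_left h3 hlam0
  have hB2 : ∑ i ∈ Finset.range m \ Lg, |f (t i) - f (s i)| < ε / 2 := by
    have hptw : ∀ i ∈ Finset.range m \ Lg, |f (t i) - f (s i)| ≤ M / lam * (t i - s i) := by
      intro i hi
      rw [Finset.mem_sdiff, Finset.mem_range] at hi
      obtain ⟨hi, hiLg⟩ := hi
      rcases eq_or_lt_of_le (hst i hi).2.1 with heq | hlt'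
      · rw [← heq, sub_self, sub_self, abs_zero, mul_zero]
      · have hiNd : i ∈ Nd := by
          rw [hNd, Finset.mem_filter, Finset.mem_range]; exact ⟨hi, hlt'⟩
        have hui : u i ≤ M := by
          by_contra h
          push_neg at h
          exact hiLg (by rw [hLg, Finset.mem_filter]; exact ⟨hiNd, h⟩)
        have hℓ : 0 < t i - s i := sub_pos.mpr hlt'
        have h12 : lam * |f (t i) - f (s i)| ≤ M * (t i - s i) := by
          have h13 := mul_le_mul_of_nonneg_right hui hℓ.le
          simp only [hu] at h13
          rwa [div_mul_cancel₀ _ hℓ.ne'] at h13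
        rw [div_mul_eq_mul_div, le_div_iff₀ hlam0]
        linarith [h12]
    calc ∑ i ∈ Finset.range m \ Lg, |f (t i) - f (s i)|
        ≤ ∑ i ∈ Finset.range m \ Lg, M / lam * (t i - s i) := Finset.sum_le_sum hptw
      _ ≤ ∑ i ∈ Finset.range m, M / lam * (t i - s i) :=
          Finset.sum_le_sum_of_subset_of_nonneg Finset.sdiff_subset (fun i hi _ => by
            have := (hst i (Finset.mem_range.mp hi)).2.1
            have hMl : (0:ℝ) ≤ M / lam := by positivity
            nlinarith)
      _ = M / lam * ∑ i ∈ Finset.range m, (t i - s i) := (Finset.mul_sum _ _ _).symm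
      _ < M / lam * (lam * ε / (2 * M)) := by
          exact mul_lt_mul_of_pos_left hlt (by positivity)
      _ = ε / 2 := by field_simp
  have hsplit : ∑ i ∈ Finset.range m, |f (t i) - f (s i)| =
      ∑ i ∈ Finset.range m \ Lg, |f (t i) - f (s i)| + ∑ i ∈ Lg, |f (t i) - f (s i)| :=
    (Finset.sum_sdiff hLgsub).symm
  rw [hsplit]
  linarith [hB1, hB2]

end
/-- Lemma 4.3.  Under (A0), (aInc)_p for some `p > 1` and (aDec)_q for some `q < ∞`,
`Lip(I) ⊆ RBV^φ(I) ⊆ AC(I)`. -/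
theorem lip_subset_rbv_subset_ac (a b : ℝ) (hab : a < b)
    (φ : ℝ → ℝ → ℝ≥0∞) (hφ : IsPhiW φ (Set.Icc a b)) (hA0 : A0 φ (Set.Icc a b))
    (p : ℝ) (hp : 1 < p) (hinc : AIncP φ (Set.Icc a b) p)
    (q : ℝ) (hdec : ADecQ φ (Set.Icc a b) q) :
    (∀ f : ℝ → ℝ, (∃ C : NNReal, LipschitzOnWith C f (Set.Icc a b)) → MemRBV φ a b f) ∧
    (∀ f : ℝ → ℝ, MemRBV φ a b f → AbsContOn f a b) :=
  ⟨fun f ⟨C, hC⟩ => lip_mem_rbv a b hab φ hφ hA0 p hp hinc f C hC,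
    fun f hf => rbv_absCont a b hab φ hφ hA0 p hp hinc f hf⟩
end
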